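/- arXiv:1509.06215 — 11 statements merged into one kernel-verified Lean document; each statement's English description precedes it below -/
import Mathlib

section
/- The conjugacy relation on linked pairs of a finite semigroup is an equivalence relation. -/
/-- `(s, e)` is a linked pair: `e` is idempotent and `s * e = s`. -/
def IsLinkedPair {S : Type*} [Semigroup S] (s e : S) : Prop := e * e = e ∧ s * e = s

/-- Conjugacy of pairs: `(s,e)` and `(t,f)` are conjugate if there are `x, y` with
`sx = t`, `xy = e`, `yx = f`. -/
def ConjPairs {S : Type*} [Semigroup S] (p q : S × S) : Prop :=
  ∃ x y : S, p.1 * x = q.1 ∧ x * y = p.2 ∧ y * x = q.2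

/-- The conjugacy relation on the linked pairs of a finite semigroup is an
equivalence relation. -/
theorem conjPairs_equivalence {S : Type*} [Semigroup S] [Fintype S] :
    Equivalence (fun p q : {p : S × S // IsLinkedPair p.1 p.2} => ConjPairs p.1 q.1) := by
  constructor
  · rintro ⟨⟨s, e⟩, he, hse⟩
    exact ⟨e, e, hse, he, he⟩
  · rintro ⟨⟨s, e⟩, he, hse⟩ ⟨⟨t, f⟩, hf, htf⟩ ⟨x, y, hx, hxy, hyx⟩
    refine ⟨y, x, ?_, hyx, hxy⟩
    simp only at *
    rw [← hx, mul_assoc, hxy, hse]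
  · rintro ⟨⟨s, e⟩, he, hse⟩ ⟨⟨t, f⟩, hf, htf⟩ ⟨⟨u, g⟩, hg, hug⟩
      ⟨x, y, hx, hxy, hyx⟩ ⟨x', y', hx', hxy', hyx'⟩
    refine ⟨x * x', y' * y, ?_, ?_, ?_⟩ <;> simp only at *
    · rw [← mul_assoc, hx, hx']
    · calc x * x' * (y' * y) = x * (x' * y') * y := by simp [mul_assoc]
        _ = x * (y * x) * y := by rw [hxy', ← hyx]
        _ = (x * y) * (x * y) := by simp [mul_assoc]
        _ = e := by rw [hxy, he]
    · calc y' * y * (x * x') = y' * (y * x) * x' := by simp [mul_assoc]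
        _ = y' * (x' * y') * x' := by rw [hyx, ← hxy']
        _ = (y' * x') * (y' * x') := by simp [mul_assoc]
        _ = g := by rw [hyx', hg]
end

section
/- Let (s,e) and (t,f) be linked pairs of a finite semigroup S such that e and s are L-related, s and t are R-related, and t and f are L-related. Then (s,e) and (t,f) are conjugate. -/
/-- Green's relation `R`: `s R t` iff there are `q, q' ∈ S¹` with `sq = t` and `tq' = s`. -/
def RRel {S : Type*} [Semigroup S] (s t : S) : Prop :=
  ∃ q q' : WithOne S, (s : WithOne S) * q = t ∧ (t : WithOne S) * q' = s

/-- Green's relation `L`: `s L t` iff there are `p, p' ∈ S¹` with `ps = t` and `p't = s`. -/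
def LRel {S : Type*} [Semigroup S] (s t : S) : Prop :=
  ∃ p p' : WithOne S, p * (s : WithOne S) = t ∧ p' * (t : WithOne S) = s

/-- Multiplying an element of `S¹` by an element of `S` lands in `S`. -/
lemma mul_coe_exists {S : Type*} [Semigroup S] (a : WithOne S) (c : S) :
    ∃ d : S, a * (c : WithOne S) = (d : WithOne S) := by
  induction a using WithOne.recOneCoe with
  | one => exact ⟨c, one_mul _⟩
  | coe b => exact ⟨b * c, (WithOne.coe_mul b c).symm⟩

/-- If `(s,e)` and `(t,f)` are linked pairs with `e L s`, `s R t` and `t L f`,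
then `(s,e)` and `(t,f)` are conjugate. -/
theorem approx_implies_conjugate {S : Type*} [Semigroup S] [Fintype S] (s e t f : S)
    (hse : IsLinkedPair s e) (htf : IsLinkedPair t f)
    (hes : LRel e s) (hst : RRel s t) (htf' : LRel t f) :
    ConjPairs (s, e) (t, f) := by
  obtain ⟨hee, hsee⟩ := hse
  obtain ⟨hff, htff⟩ := htf
  obtain ⟨p, p', hp, hp'⟩ := hes
  obtain ⟨q, q', hq, hq'⟩ := hst
  obtain ⟨u, u', hu, hu'⟩ := htf'
  obtain ⟨x1, hx1⟩ := mul_coe_exists q f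
  obtain ⟨y1, hy1⟩ := mul_coe_exists q' e
  have L : ∀ (a b c : WithOne S), a * b = c → ∀ x : WithOne S, a * (b * x) = c * x :=
    fun a b c h x => by rw [← mul_assoc, h]
  have he' : (e : WithOne S) * e = e := by rw [← WithOne.coe_mul, hee]
  have hf' : (f : WithOne S) * f = f := by rw [← WithOne.coe_mul, hff]
  have hs' : (s : WithOne S) * e = s := by rw [← WithOne.coe_mul, hsee]
  have ht' : (t : WithOne S) * f = t := by rw [← WithOne.coe_mul, htff]
  refine ⟨e * x1, f * y1, ?_, ?_, ?_⟩
  · -- s * (e * x1) = t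
    have : (s : WithOne S) * (↑e * (q * ↑f)) = ↑t := by
      rw [L _ _ _ hs', L _ _ _ hq, ht']
    rw [← WithOne.coe_inj, WithOne.coe_mul, WithOne.coe_mul, ← hx1, ← mul_assoc,
      mul_assoc, this]
  · -- (e * x1) * (f * y1) = e
    have : (e : WithOne S) * (q * ↑f) * (↑f * (q' * ↑e)) = ↑e := by
      calc (e : WithOne S) * (q * ↑f) * (↑f * (q' * ↑e))
          = ↑e * (q * (↑f * (↑f * (q' * ↑e)))) := by
            rw [mul_assoc, mul_assoc]
        _ = ↑e * (q * (↑f * (q' * ↑e))) := by rw [L _ _ _ hf']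
        _ = p' * ↑s * (q * (↑f * (q' * ↑e))) := by rw [hp']
        _ = p' * (↑s * (q * (↑f * (q' * ↑e)))) := mul_assoc _ _ _
        _ = p' * (↑t * (↑f * (q' * ↑e))) := by rw [L _ _ _ hq]
        _ = p' * (↑t * (q' * ↑e)) := by rw [L _ _ _ ht']
        _ = p' * (↑s * ↑e) := by rw [L _ _ _ hq']
        _ = p' * ↑s := by rw [hs']
        _ = ↑e := hp'
    rw [← WithOne.coe_inj, WithOne.coe_mul, WithOne.coe_mul, WithOne.coe_mul,
      ← hx1, ← hy1, this]
  · -- (f * y1) * (e * x1) = f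
    have : (f : WithOne S) * (q' * ↑e) * (↑e * (q * ↑f)) = ↑f := by
      calc (f : WithOne S) * (q' * ↑e) * (↑e * (q * ↑f))
          = ↑f * (q' * (↑e * (↑e * (q * ↑f)))) := by rw [mul_assoc, mul_assoc]
        _ = ↑f * (q' * (↑e * (q * ↑f))) := by rw [L _ _ _ he']
        _ = u * ↑t * (q' * (↑e * (q * ↑f))) := by rw [hu]
        _ = u * (↑t * (q' * (↑e * (q * ↑f)))) := mul_assoc _ _ _
        _ = u * (↑s * (↑e * (q * ↑f))) := by rw [L _ _ _ hq']
        _ = u * (↑s * (q * ↑f)) := by rw [L _ _ _ hs']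
        _ = u * (↑t * ↑f) := by rw [L _ _ _ hq]
        _ = u * ↑t := by rw [ht']
        _ = ↑f := hu
    rw [← WithOne.coe_inj, WithOne.coe_mul, WithOne.coe_mul, WithOne.coe_mul,
      ← hx1, ← hy1, this]
end

section
/- The conjugacy relation on linked pairs of a finite semigroup is the finest left-stable equivalence relation on linked pairs that is coarser than the relation ≈ defined by (s,e) ≈ (t,f) iff (s,e) = (t,f), or (e L s and s R t and t L f). -/
/-- The type of linked pairs of a semigroup `S`. -/
def LP (S : Type*) [Semigroup S] := {p : S × S // IsLinkedPair p.1 p.2}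

/-- Conjugacy of linked pairs. -/
def ConjLP {S : Type*} [Semigroup S] (p q : LP S) : Prop :=
  ∃ x y : S, p.1.1 * x = q.1.1 ∧ x * y = p.1.2 ∧ y * x = q.1.2

/-- Left multiplication of a linked pair `(s,e)` by `x`, yielding the linked pair `(xs,e)`. -/
def lmulLP {S : Type*} [Semigroup S] (x : S) (p : LP S) : LP S :=
  ⟨(x * p.1.1, p.1.2), ⟨p.2.1, by rw [mul_assoc, p.2.2]⟩⟩

/-- A relation `E` on linked pairs is left-stable if `(s,e) E (t,f)` implies
`(xs,e) E (xt,f)` for all `x ∈ S`. -/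
def LeftStable {S : Type*} [Semigroup S] (E : LP S → LP S → Prop) : Prop :=
  ∀ (x : S) (p q : LP S), E p q → E (lmulLP x p) (lmulLP x q)

/-- The relation `≈`: `(s,e) ≈ (t,f)` iff `(s,e) = (t,f)`, or `e L s`, `s R t` and `t L f`. -/
def ApproxRel {S : Type*} [Semigroup S] (p q : LP S) : Prop :=
  p = q ∨ (LRel p.1.2 p.1.1 ∧ RRel p.1.1 q.1.1 ∧ LRel q.1.1 q.1.2)

section Aux

variable {S : Type*} [Semigroup S]

lemma conjLP_refl (p : LP S) : ConjLP p p :=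
  ⟨p.1.2, p.1.2, p.2.2, p.2.1, p.2.1⟩

lemma conjLP_symm {p q : LP S} (h : ConjLP p q) : ConjLP q p := by
  obtain ⟨⟨s, e⟩, he, hse⟩ := p
  obtain ⟨⟨t, f⟩, hf, htf⟩ := q
  obtain ⟨x, y, h1, h2, h3⟩ := h
  dsimp only at *
  refine ⟨y * x * y, x, ?_, ?_, ?_⟩
  · show t * (y * x * y) = s
    rw [← h1]
    calc s * x * (y * x * y) = s * (x * y) * (x * y) := by simp only [mul_assoc]
      _ = s := by rw [h2, hse, hse]
  · show y * x * y * x = f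
    calc y * x * y * x = (y * x) * (y * x) := by simp only [mul_assoc]
      _ = f := by rw [h3, hf]
  · show x * (y * x * y) = e
    calc x * (y * x * y) = (x * y) * (x * y) := by simp only [mul_assoc]
      _ = e := by rw [h2, he]

lemma conjLP_trans {p q r : LP S} (h : ConjLP p q) (h' : ConjLP q r) : ConjLP p r := by
  obtain ⟨⟨s, e⟩, he, hse⟩ := p
  obtain ⟨⟨t, f⟩, hf, htf⟩ := q
  obtain ⟨⟨u, g⟩, hg, hug⟩ := r
  obtain ⟨x, y, h1, h2, h3⟩ := h
  obtain ⟨x', y', k1, k2, k3⟩ := h'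
  dsimp only at *
  refine ⟨x * x', y' * y, ?_, ?_, ?_⟩
  · show s * (x * x') = u
    rw [← mul_assoc, h1, k1]
  · show x * x' * (y' * y) = e
    calc x * x' * (y' * y) = x * (x' * y') * y := by simp only [mul_assoc]
      _ = x * (y * x) * y := by rw [k2, ← h3]
      _ = (x * y) * (x * y) := by simp only [mul_assoc]
      _ = e := by rw [h2, he]
  · show y' * y * (x * x') = g
    calc y' * y * (x * x') = y' * (y * x) * x' := by simp only [mul_assoc]
      _ = y' * (x' * y') * x' := by rw [h3, ← k2]
      _ = (y' * x') * (y' * x') := by simp only [mul_assoc]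
      _ = g := by rw [k3, hg]

lemma coe_mul_exists (e : S) (u : WithOne S) : ∃ a : S, (e : WithOne S) * u = ↑a := by
  rcases u with _ | a
  · exact ⟨e, mul_one _⟩
  · exact ⟨e * a, (WithOne.coe_mul e a).symm⟩

lemma approx_imp_conj (p q : LP S) (h : ApproxRel p q) : ConjLP p q := by
  rcases h with rfl | ⟨hL1, hR, hL2⟩
  · exact conjLP_refl p
  obtain ⟨⟨s, e⟩, he, hse⟩ := p
  obtain ⟨⟨t, f⟩, hf, htf⟩ := q
  dsimp only at *
  obtain ⟨a, a', -, ha'⟩ := hL1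
  obtain ⟨b, b', hb, hb'⟩ := hR
  obtain ⟨c, c', hc, -⟩ := hL2
  -- x with ↑x = ↑e * b * ↑f, y with ↑y = ↑f * b' * ↑e
  obtain ⟨x₀, hx₀⟩ := coe_mul_exists e b
  obtain ⟨y₀, hy₀⟩ := coe_mul_exists f b'
  refine ⟨x₀ * f, y₀ * e, ?_, ?_, ?_⟩
  · show s * (x₀ * f) = t
    apply WithOne.coe_inj.mp
    calc ((s * (x₀ * f) : S) : WithOne S) = ↑s * (↑e * b) * ↑f := by
          rw [WithOne.coe_mul, WithOne.coe_mul, hx₀, mul_assoc]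
      _ = ↑s * b * ↑f := by rw [← mul_assoc, ← WithOne.coe_mul, hse]
      _ = ↑t := by rw [hb, ← WithOne.coe_mul, htf]
  · have key : (s : WithOne S) * (b * (↑f * (b' * ↑e))) = ↑s := by
      calc (s : WithOne S) * (b * (↑f * (b' * ↑e))) = ((↑s * b) * ↑f) * (b' * ↑e) := by
            simp only [mul_assoc]
        _ = (↑t * b') * ↑e := by rw [hb, ← WithOne.coe_mul, htf, ← mul_assoc]
        _ = ↑s := by rw [hb', ← WithOne.coe_mul, hse]
    show x₀ * f * (y₀ * e) = e
    apply WithOne.coe_inj.mp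
    calc ((x₀ * f * (y₀ * e) : S) : WithOne S)
        = (↑e * b) * (↑f * ((↑f * b') * ↑e)) := by
          simp only [WithOne.coe_mul]; rw [hx₀, hy₀]; simp only [mul_assoc]
      _ = (↑e * b) * ((↑f * ↑f) * (b' * ↑e)) := by simp only [mul_assoc]
      _ = (↑e * b) * (↑f * (b' * ↑e)) := by rw [← WithOne.coe_mul, hf]
      _ = ↑e * (b * (↑f * (b' * ↑e))) := by rw [mul_assoc]
      _ = a' * (↑s * (b * (↑f * (b' * ↑e)))) := by rw [← ha', mul_assoc]
      _ = ↑e := by rw [key, ha']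
  · have key : (t : WithOne S) * (b' * (↑e * (b * ↑f))) = ↑t := by
      calc (t : WithOne S) * (b' * (↑e * (b * ↑f))) = ((↑t * b') * ↑e) * (b * ↑f) := by
            simp only [mul_assoc]
        _ = (↑s * b) * ↑f := by rw [hb', ← WithOne.coe_mul, hse, mul_assoc]
        _ = ↑t := by rw [hb, ← WithOne.coe_mul, htf]
    show y₀ * e * (x₀ * f) = f
    apply WithOne.coe_inj.mp
    calc ((y₀ * e * (x₀ * f) : S) : WithOne S)
        = (↑f * b') * (↑e * ((↑e * b) * ↑f)) := by
          simp only [WithOne.coe_mul]; rw [hx₀, hy₀]; simp only [mul_assoc]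
      _ = (↑f * b') * ((↑e * ↑e) * (b * ↑f)) := by simp only [mul_assoc]
      _ = (↑f * b') * (↑e * (b * ↑f)) := by rw [← WithOne.coe_mul, he]
      _ = ↑f * (b' * (↑e * (b * ↑f))) := by rw [mul_assoc]
      _ = c * (↑t * (b' * (↑e * (b * ↑f)))) := by rw [← hc, mul_assoc]
      _ = ↑f := by rw [key, hc]

end Aux

/-- The conjugacy relation on linked pairs of a finite semigroup is the finest
left-stable equivalence relation coarser than `≈`. -/
theorem conjugacy_finest_left_stable {S : Type*} [Semigroup S] [Fintype S] :
    Equivalence (ConjLP (S := S)) ∧ LeftStable (ConjLP (S := S)) ∧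
      (∀ p q : LP S, ApproxRel p q → ConjLP p q) ∧
      (∀ E : LP S → LP S → Prop, Equivalence E → LeftStable E →
        (∀ p q : LP S, ApproxRel p q → E p q) →
        ∀ p q : LP S, ConjLP p q → E p q) := by
  refine ⟨⟨conjLP_refl, conjLP_symm, conjLP_trans⟩, ?_, approx_imp_conj, ?_⟩
  · rintro z p q ⟨x, y, h1, h2, h3⟩
    exact ⟨x, y, by show z * p.1.1 * x = z * q.1.1; rw [mul_assoc, h1], h2, h3⟩
  · intro E hE hstab happrox p q hconj
    obtain ⟨⟨s, e⟩, he, hse⟩ := p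
    obtain ⟨⟨t, f⟩, hf, htf⟩ := q
    obtain ⟨x, y, h1, h2, h3⟩ := hconj
    dsimp only at h1 h2 h3 he hse hf htf
    have hexf : (e * x) * f = e * x := by
      rw [← h3]
      calc (e * x) * (y * x) = (e * (x * y)) * x := by simp only [mul_assoc]
        _ = e * x := by rw [h2, he]
    set A : LP S := ⟨(e, e), he, he⟩ with hA
    set B : LP S := ⟨(e * x, f), hf, hexf⟩ with hB
    have hAB : ApproxRel A B := by
      refine Or.inr ⟨⟨1, 1, one_mul _, one_mul _⟩, ⟨↑x, ↑y, ?_, ?_⟩, ⟨↑y, ↑(e * x), ?_, ?_⟩⟩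
      · rw [← WithOne.coe_mul]
      · show ((e * x : S) : WithOne S) * ↑y = ↑e
        rw [← WithOne.coe_mul, WithOne.coe_inj, mul_assoc, h2, he]
      · show (↑y : WithOne S) * ↑(e * x) = ↑f
        rw [← WithOne.coe_mul, WithOne.coe_inj, ← h2]
        calc y * ((x * y) * x) = (y * x) * (y * x) := by simp only [mul_assoc]
          _ = f := by rw [h3, hf]
      · rw [← WithOne.coe_mul, WithOne.coe_inj]
        exact hexf
    have hEAB : E (lmulLP s A) (lmulLP s B) := hstab s A B (happrox A B hAB)
    have eA : lmulLP s A = (⟨(s, e), he, hse⟩ : LP S) := by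
      apply Subtype.ext
      show (s * e, e) = (s, e)
      rw [hse]
    have eB : lmulLP s B = (⟨(t, f), hf, htf⟩ : LP S) := by
      apply Subtype.ext
      show (s * (e * x), f) = (t, f)
      rw [← mul_assoc, hse, h1]
    rwa [eA, eB] at hEAB
end

section
/- A surjective morphism h : A⁺ → S onto a finite semigroup strongly recognizes a language L ⊆ A^ω if and only if for all s, t ∈ S, whenever [s][t]^ω ∩ L ≠ ∅ we have [s][t]^ω ⊆ L, where [s] = h⁻¹(s). -/
/-- The product under the morphism induced by `f : A → S` of a finite word,
`none` on the empty word. -/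
def wordProd {A S : Type*} [Semigroup S] (f : A → S) : List A → Option S
  | [] => none
  | a :: l => some (l.foldl (fun s b => s * f b) (f a))

/-- The factor `α[i..j)` of an infinite word `α`. -/
def seg {A : Type*} (α : ℕ → A) (i j : ℕ) : List A :=
  (List.range (j - i)).map fun k => α (i + k)

/-- `α ∈ [s][t]^ω`: the infinite word `α` factors as `u v₁ v₂ ⋯` with
`h(u) = s` and `h(vᵢ) = t` for all `i`. -/
def InSE {A S : Type*} [Semigroup S] (f : A → S) (s t : S) (α : ℕ → A) : Prop :=
  ∃ c : ℕ → ℕ, 0 < c 0 ∧ StrictMono c ∧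
    wordProd f (seg α 0 (c 0)) = some s ∧
    ∀ i, wordProd f (seg α (c i) (c (i + 1))) = some t

/-- `[P] = ⋃_{(s,t) ∈ P} [s][t]^ω`. -/
def LangOf {A S : Type*} [Semigroup S] (f : A → S) (P : Set (S × S)) : Set (ℕ → A) :=
  {α | ∃ p ∈ P, InSE f p.1 p.2 α}

/-- The infinite word `u v^ω` (for `v ≠ []`). -/
def upow {A : Type*} [Inhabited A] (u v : List A) : ℕ → A := fun n =>
  if n < u.length then u.getD n default
  else v.getD ((n - u.length) % v.length) default

/-- `h` strongly recognizes `L`: `L = [P]` for some set `P` of linked pairs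
closed under conjugation. -/
def StronglyRecognizes {A S : Type*} [Semigroup S] (f : A → S) (L : Set (ℕ → A)) : Prop :=
  ∃ P : Set (S × S), (∀ p ∈ P, IsLinkedPair p.1 p.2) ∧
    (∀ p q : S × S, p ∈ P → IsLinkedPair q.1 q.2 → ConjPairs p q → q ∈ P) ∧
    L = LangOf f P

namespace SRAux
variable {A S : Type*} [Semigroup S]
variable {A S : Type*} [Semigroup S]

lemma foldl_mul (f : A → S) (x y : S) (l : List A) :
    l.foldl (fun s b => s * f b) (x * y) = x * l.foldl (fun s b => s * f b) y := by
  induction l generalizing y with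
  | nil => rfl
  | cons a l ih => simp only [List.foldl_cons, mul_assoc]; exact ih (y * f a)

lemma wordProd_ne_nil (f : A → S) {l : List A} {s : S} (h : wordProd f l = some s) : l ≠ [] := by
  cases l with
  | nil => simp [wordProd] at h
  | cons a l => simp

lemma wordProd_append (f : A → S) {l1 l2 : List A} {x y : S}
    (h1 : wordProd f l1 = some x) (h2 : wordProd f l2 = some y) :
    wordProd f (l1 ++ l2) = some (x * y) := by
  cases l1 with
  | nil => simp [wordProd] at h1
  | cons a l1 =>
    cases l2 with
    | nil => simp [wordProd] at h2
    | cons b l2 =>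
      simp only [wordProd, Option.some.injEq] at h1 h2
      subst h1 h2
      have e : wordProd f (a :: (l1 ++ b :: l2)) =
          some (List.foldl (fun s c => s * f c) (f a) (l1 ++ b :: l2)) := rfl
      rw [List.cons_append, e, List.foldl_append, List.foldl_cons, foldl_mul]

lemma seg_length (α : ℕ → A) (i j : ℕ) : (seg α i j).length = j - i := by
  simp [seg]

lemma seg_append (α : ℕ → A) {i j k : ℕ} (h1 : i ≤ j) (h2 : j ≤ k) :
    seg α i j ++ seg α j k = seg α i k := by
  unfold seg
  rw [show k - i = (j - i) + (k - j) by omega, List.range_add, List.map_append, List.map_map]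
  congr 1
  apply List.map_congr_left
  intro x _
  simp only [Function.comp_apply]
  congr 1
  omega

def sp (f : A → S) (α : ℕ → A) (i j : ℕ) : S :=
  (seg α (i+1) j).foldl (fun s b => s * f b) (f (α i))

lemma seg_cons (α : ℕ → A) {i j : ℕ} (h : i < j) : seg α i j = α i :: seg α (i+1) j := by
  unfold seg
  rw [show j - i = (j - (i+1)) + 1 by omega, List.range_succ_eq_map, List.map_cons, List.map_map]
  refine congrArg₂ List.cons (by simp) ?_
  apply List.map_congr_left
  intro x _
  simp only [Function.comp_apply]
  congr 1
  omega

lemma wordProd_seg (f : A → S) (α : ℕ → A) {i j : ℕ} (h : i < j) :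
    wordProd f (seg α i j) = some (sp f α i j) := by
  rw [seg_cons α h]; rfl

lemma sp_mul (f : A → S) (α : ℕ → A) {i j k : ℕ} (h1 : i < j) (h2 : j < k) :
    sp f α i k = sp f α i j * sp f α j k := by
  have h := wordProd_append f (wordProd_seg f α h1) (wordProd_seg f α h2)
  rw [seg_append α h1.le h2.le, wordProd_seg f α (h1.trans h2)] at h
  exact Option.some.inj h

lemma inse_iff (f : A → S) (s t : S) (α : ℕ → A) :
    InSE f s t α ↔ ∃ c : ℕ → ℕ, 0 < c 0 ∧ StrictMono c ∧ sp f α 0 (c 0) = s ∧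
      ∀ i, sp f α (c i) (c (i+1)) = t := by
  constructor
  · rintro ⟨c, h0, hm, hp, hb⟩
    refine ⟨c, h0, hm, ?_, fun i => ?_⟩
    · rw [wordProd_seg f α h0] at hp; exact Option.some.inj hp
    · have := hb i; rw [wordProd_seg f α (hm (Nat.lt_succ_self i))] at this
      exact Option.some.inj this
  · rintro ⟨c, h0, hm, hp, hb⟩
    exact ⟨c, h0, hm, by rw [wordProd_seg f α h0, hp],
      fun i => by rw [wordProd_seg f α (hm (Nat.lt_succ_self i)), hb i]⟩

def spow (t : S) : ℕ → S
  | 0 => t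
  | n+1 => spow t n * t

lemma spow_add (t : S) (m n : ℕ) : spow t (m + n + 1) = spow t m * spow t n := by
  induction n with
  | zero => rfl
  | succ n ih =>
    show spow t ((m + n + 1) + 1) = _
    rw [spow, ih, spow, mul_assoc]

lemma spow_idem {e : S} (he : e * e = e) : ∀ k, spow e k = e := by
  intro k; induction k with
  | zero => rfl
  | succ k ih => rw [spow, ih, he]

lemma exists_idem [Finite S] (t : S) : ∃ N, spow t N * spow t N = spow t N := by
  obtain ⟨a, b, hab, h⟩ := Finite.exists_ne_map_eq_of_infinite (spow t)
  wlog hlt : a < b generalizing a b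
  · exact this b a hab.symm h.symm (by omega)
  set d := b - a with hd
  have hd1 : 1 ≤ d := by omega
  have hstep : ∀ k, a ≤ k → spow t k = spow t (k + d) := by
    intro k hk
    rcases Nat.eq_or_lt_of_le hk with rfl | hk'
    · rw [hd, show a + (b - a) = b by omega, h]
    · have e1 : a + (k - a - 1) + 1 = k := by omega
      have e2 : b + (k - a - 1) + 1 = k + d := by omega
      rw [← e1, spow_add, h, ← spow_add]
      congr 1
      omega
  have hiter : ∀ j k, a ≤ k → spow t k = spow t (k + j * d) := by
    intro j
    induction j with
    | zero => simp
    | succ j ih =>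
      intro k hk
      rw [ih k hk, hstep (k + j * d) (by omega)]
      congr 1; ring
  have hm1 : a + 1 ≤ (a + 1) * d := Nat.le_mul_of_pos_right _ hd1
  refine ⟨(a + 1) * d - 1, ?_⟩
  have hN : a ≤ (a + 1) * d - 1 := by omega
  rw [← spow_add, show (a+1)*d - 1 + ((a+1)*d - 1) + 1 = ((a+1)*d - 1) + (a+1)*d by omega]
  exact (hiter (a+1) _ hN).symm

lemma prefix_const (f : A → S) (α : ℕ → A) {c : ℕ → ℕ} (h0 : 0 < c 0) (hm : StrictMono c)
    {s e : S} (hp : sp f α 0 (c 0) = s) (hb : ∀ i, sp f α (c i) (c (i+1)) = e)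
    (hse : s * e = s) : ∀ i, sp f α 0 (c i) = s := by
  intro i; induction i with
  | zero => exact hp
  | succ i ih =>
    rw [sp_mul f α (h0.trans_le (hm.monotone (Nat.zero_le i))) (hm (Nat.lt_succ_self i)),
      ih, hb, hse]

lemma chain_pow (f : A → S) (α : ℕ → A) {c : ℕ → ℕ} (hm : StrictMono c) {t : S}
    (hb : ∀ i, sp f α (c i) (c (i+1)) = t) :
    ∀ a k, sp f α (c a) (c (a + k + 1)) = spow t k := by
  intro a k; induction k with
  | zero => exact hb a
  | succ k ih =>
    have h1 : c a < c (a + k + 1) := hm (by omega)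
    have h2 : c (a + k + 1) < c (a + k + 1 + 1) := hm (by omega)
    rw [show a + (k + 1) + 1 = (a + k + 1) + 1 by omega, sp_mul f α h1 h2, ih, hb, spow]

lemma chain_const (f : A → S) (α : ℕ → A) {c : ℕ → ℕ} (hm : StrictMono c) {e : S}
    (hb : ∀ i, sp f α (c i) (c (i+1)) = e) (he : e * e = e) :
    ∀ i j, i < j → sp f α (c i) (c j) = e := by
  intro i j hij
  have : sp f α (c i) (c (i + (j - i - 1) + 1)) = spow e (j - i - 1) := chain_pow f α hm hb i _
  rw [show i + (j - i - 1) + 1 = j by omega, spow_idem he] at this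
  exact this

lemma pigeon {κ : Type*} [Finite κ] {X : Set ℕ} (hX : X.Infinite) (g : ℕ → κ) :
    ∃ k, {x ∈ X | g x = k}.Infinite := by
  by_contra h
  push_neg at h
  exact hX ((Set.finite_iUnion h).subset (fun x hx => Set.mem_iUnion.2 ⟨g x, hx, rfl⟩))

lemma ramsey_pairs {κ : Type*} [Finite κ] (C : ℕ → ℕ → κ) :
    ∃ (m : ℕ → ℕ) (k : κ), StrictMono m ∧ ∀ i j, i < j → C (m i) (m j) = k := by
  have step : ∀ X : Set ℕ, X.Infinite → ∃ Y : Set ℕ, Y.Infinite ∧ Y ⊆ X ∧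
      (∀ y ∈ Y, sInf X < y) ∧ ∃ k, ∀ y ∈ Y, C (sInf X) y = k := by
    intro X hX
    have h1 : (X ∩ Set.Ioi (sInf X)).Infinite := by
      have he : X \ Set.Iic (sInf X) = X ∩ Set.Ioi (sInf X) := by
        ext x; simp only [Set.mem_diff, Set.mem_Iic, Set.mem_inter_iff, Set.mem_Ioi, not_le]
      rw [← he]; exact hX.diff (Set.finite_Iic _)
    obtain ⟨k, hk⟩ := pigeon h1 (C (sInf X))
    exact ⟨_, hk, fun y hy => hy.1.1, fun y hy => hy.1.2, k, fun y hy => hy.2⟩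
  choose F hF1 hF2 hF3 hF4 using step
  choose col hcol using hF4
  let Xs : ℕ → {X : Set ℕ // X.Infinite} := fun n =>
    Nat.rec ⟨Set.univ, Set.infinite_univ⟩ (fun _ p => ⟨F p.1 p.2, hF1 p.1 p.2⟩) n
  let a : ℕ → ℕ := fun n => sInf (Xs n).1
  let cl : ℕ → κ := fun n => col (Xs n).1 (Xs n).2
  have hXsucc : ∀ n, (Xs (n+1)).1 = F (Xs n).1 (Xs n).2 := fun n => rfl
  have hsub : ∀ n m, n ≤ m → (Xs m).1 ⊆ (Xs n).1 := by
    intro n m h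
    induction m, h using Nat.le_induction with
    | base => exact fun x hx => hx
    | succ m hm ih => exact fun x hx => ih (hF2 (Xs m).1 (Xs m).2 hx)
  have hmem : ∀ n, a n ∈ (Xs n).1 := fun n => Nat.sInf_mem (Xs n).2.nonempty
  have ha : StrictMono a :=
    strictMono_nat_of_lt_succ (fun n => hF3 (Xs n).1 (Xs n).2 _ (hmem (n+1)))
  have hC : ∀ n m, n < m → C (a n) (a m) = cl n := by
    intro n m h
    have hx : a m ∈ F (Xs n).1 (Xs n).2 := hsub (n+1) m h (hmem m)
    exact hcol (Xs n).1 (Xs n).2 _ hx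
  obtain ⟨k, hk⟩ := pigeon (Set.infinite_univ (α := ℕ)) cl
  have hk' : {n | cl n = k}.Infinite := by simpa using hk
  have he : StrictMono (Nat.nth (fun n => cl n = k)) := Nat.nth_strictMono hk'
  refine ⟨a ∘ Nat.nth (fun n => cl n = k), k, ha.comp he, fun i j hij => ?_⟩
  rw [Function.comp_apply, Function.comp_apply, hC _ _ (he hij)]
  exact Nat.nth_mem_of_infinite hk' i

lemma conj_of_common [Fintype S] (f : A → S) (α : ℕ → A) {s e t' f' : S}
    (hse : IsLinkedPair s e) (htf : IsLinkedPair t' f')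
    (h1 : InSE f s e α) (h2 : InSE f t' f' α) : ConjPairs (s, e) (t', f') := by
  rw [inse_iff] at h1 h2
  obtain ⟨c, hc0, hcm, hcp, hcb⟩ := h1
  obtain ⟨d, hd0, hdm, hdp, hdb⟩ := h2
  let K : ℕ → ℕ := fun n => Nat.rec 0 (fun _ kn => d (c kn + 1) + 1) n
  let J : ℕ → ℕ := fun n => c (K n) + 1
  have hKsucc : ∀ n, K (n+1) = d (c (K n) + 1) + 1 := fun n => rfl
  have hcd : ∀ n, c (K n) < d (J n) :=
    fun n => lt_of_lt_of_le (Nat.lt_succ_self _) hdm.le_apply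
  have hdc : ∀ n, d (J n) < c (K (n+1)) := by
    intro n
    calc d (J n) < K (n+1) := by rw [hKsucc]; exact Nat.lt_succ_self _
    _ ≤ c (K (n+1)) := hcm.le_apply
  have hK : StrictMono K := by
    apply strictMono_nat_of_lt_succ
    intro n
    calc K n ≤ c (K n) := hcm.le_apply
    _ < d (J n) := hcd n
    _ < K (n+1) := by rw [hKsucc]; exact Nat.lt_succ_self _
  have hJ : StrictMono J := fun m n h => Nat.succ_lt_succ (hcm (hK h))
  obtain ⟨a, b, hab, hx⟩ := Finite.exists_ne_map_eq_of_infinite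
      (fun n => sp f α (c (K n)) (d (J n)))
  wlog hlt : a < b generalizing a b
  · exact this b a hab.symm hx.symm (by omega)
  have hx2 : sp f α (c (K a)) (d (J a)) = sp f α (c (K b)) (d (J b)) := hx
  have hdcb : d (J a) < c (K b) :=
    lt_of_lt_of_le (hdc a) (hcm.monotone (hK.monotone hlt))
  refine ⟨sp f α (c (K a)) (d (J a)), sp f α (d (J a)) (c (K b)), ?_, ?_, ?_⟩
  · show s * _ = t'
    have hpc : sp f α 0 (c (K a)) = s := prefix_const f α hc0 hcm hcp hcb hse.2 (K a)
    have hpd : sp f α 0 (d (J a)) = t' := prefix_const f α hd0 hdm hdp hdb htf.2 (J a)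
    have h0c : 0 < c (K a) := lt_of_lt_of_le hc0 (hcm.monotone (Nat.zero_le _))
    rw [← hpc, ← hpd, ← sp_mul f α h0c (hcd a)]
  · show _ * _ = e
    rw [← sp_mul f α (hcd a) hdcb]
    exact chain_const f α hcm hcb hse.1 _ _ (hK hlt)
  · show _ * _ = f'
    rw [hx2, ← sp_mul f α hdcb (hcd b)]
    exact chain_const f α hdm hdb htf.1 _ _ (hJ hlt)

lemma exists_linked_factorization [Fintype S] (f : A → S) (α : ℕ → A) :
    ∃ s e : S, IsLinkedPair s e ∧ InSE f s e α := by
  obtain ⟨m, e, hm, he⟩ := ramsey_pairs (fun i j => sp f α i j)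
  have h01 : (0:ℕ) < 1 := Nat.one_pos
  have hee : e * e = e := by
    have h1 := he 0 1 Nat.one_pos
    have h2 := he 1 2 Nat.one_lt_two
    have h3 := he 0 2 Nat.zero_lt_two
    have h4 := sp_mul f α (hm Nat.one_pos) (hm Nat.one_lt_two)
    rw [h1, h2, h3] at h4
    exact h4.symm
  have hm1 : 0 < m 1 := lt_of_le_of_lt (Nat.zero_le (m 0)) (hm Nat.one_pos)
  have hm2 : m 1 < m 2 := hm Nat.one_lt_two
  refine ⟨sp f α 0 (m 1) * e, e, ⟨hee, by rw [mul_assoc, hee]⟩, ?_⟩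
  rw [inse_iff]
  refine ⟨fun i => m (i + 2), lt_of_lt_of_le hm1 (hm.monotone (by omega)), 
    hm.comp (fun i j h => by omega), ?_, fun i => ?_⟩
  · rw [sp_mul f α hm1 hm2]
    congr 1
    exact (he 1 2 Nat.one_lt_two) 
  · exact he (i+2) (i+3) (by omega)

lemma inse_canon (f : A → S) {s t : S} {α : ℕ → A} (h : InSE f s t α) (N : ℕ) :
    InSE f (s * spow t N) (spow t N) α := by
  rw [inse_iff] at h ⊢
  obtain ⟨c, h0, hm, hp, hb⟩ := h
  refine ⟨fun i => c ((N+1) * (i+1)), ?_, ?_, ?_, fun i => ?_⟩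
  · exact lt_of_lt_of_le h0 (hm.monotone (by omega))
  · exact hm.comp (fun i j h =>
      mul_lt_mul_of_pos_left (by omega : i + 1 < j + 1) (by omega : 0 < N + 1))
  · show sp f α 0 (c ((N+1) * (0+1))) = s * spow t N
    have h1 : c 0 < c ((N+1) * (0+1)) := hm (by omega)
    rw [sp_mul f α h0 h1, hp]
    congr 1
    have := chain_pow f α hm hb 0 N
    rw [show (0:ℕ) + N + 1 = (N+1) * (0+1) by ring] at this
    exact this
  · have := chain_pow f α hm hb ((N+1) * (i+1)) N
    rw [show (N+1) * (i+1) + N + 1 = (N+1) * (i+1+1) by ring] at this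
    exact this

lemma seg_eq (α : ℕ → A) (i : ℕ) (l : List A)
    (h : ∀ k (hk : k < l.length), α (i + k) = l[k]) : seg α i (i + l.length) = l := by
  apply List.ext_getElem
  · simp [seg_length]
  · intro n h1 h2
    have hg : (seg α i (i + l.length))[n] = α (i + n) := by
      simp [seg]
    rw [hg, h n h2]

lemma upow_apply_lt [Inhabited A] (u v : List A) {n : ℕ} (h : n < u.length) :
    upow u v n = u.getD n default := by
  unfold upow; rw [if_pos h]

lemma upow_apply_ge [Inhabited A] (u v : List A) {n : ℕ} (h : ¬ n < u.length) :
    upow u v n = v.getD ((n - u.length) % v.length) default := by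
  unfold upow; rw [if_neg h]

lemma seg_upow_prefix [Inhabited A] (u v : List A) : seg (upow u v) 0 u.length = u := by
  have h0 : u.length = 0 + u.length := by omega
  rw [h0]
  apply seg_eq
  intro k hk
  rw [Nat.zero_add, upow_apply_lt u v hk, List.getD_eq_getElem _ _ hk]

lemma seg_upow_block [Inhabited A] (u v : List A) (k : ℕ) :
    seg (upow u v) (u.length + k * v.length) (u.length + k * v.length + v.length) = v := by
  apply seg_eq
  intro r hr
  have h1 : ¬ (u.length + k * v.length + r < u.length) := by omega
  rw [upow_apply_ge u v h1]
  have h2 : u.length + k * v.length + r - u.length = k * v.length + r := by omega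
  rw [h2, Nat.mul_comm, Nat.mul_add_mod, Nat.mod_eq_of_lt hr, List.getD_eq_getElem _ _ hr]

lemma upow_shift [Inhabited A] (u x y : List A) :
    upow (u ++ x) (y ++ x) = upow u (x ++ y) := by
  funext n
  unfold upow
  simp only [List.length_append]
  by_cases h1 : n < u.length
  · rw [if_pos (by omega), if_pos h1, List.getD_append _ _ _ _ h1]
  · rw [if_neg h1]
    by_cases h2 : n < u.length + x.length
    · rw [if_pos h2]
      have hx : n - u.length < x.length := by omega
      have hL : n - u.length < x.length + y.length := by omega
      rw [List.getD_append_right _ _ _ _ (by omega : u.length ≤ n), Nat.mod_eq_of_lt hL,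
        List.getD_append _ _ _ _ hx]
    · rw [if_neg h2]
      rcases Nat.eq_zero_or_pos (x.length + y.length) with hL0 | hL0
      · have hx0 : x = [] := List.length_eq_zero_iff.mp (by omega)
        have hy0 : y = [] := List.length_eq_zero_iff.mp (by omega)
        subst hx0; subst hy0; simp
      · have hcomm : y.length + x.length = x.length + y.length := Nat.add_comm _ _
        rw [hcomm]
        have hnu : n - u.length = (n - (u.length + x.length)) + x.length := by omega
        rw [hnu, ← Nat.mod_add_mod]
        set L := x.length + y.length with hLdef
        set m := n - (u.length + x.length) with hmdef
        set r := m % L with hrdef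
        have hrL : r < L := Nat.mod_lt _ hL0
        rcases lt_or_ge r y.length with hry | hry
        · have hmod : (r + x.length) % L = r + x.length := Nat.mod_eq_of_lt (by omega)
          rw [hmod, List.getD_append _ _ _ _ hry,
            List.getD_append_right _ _ _ _ (by omega : x.length ≤ r + x.length)]
          congr 1
          omega
        · have hmod : (r + x.length) % L = r - y.length := by
            have he : r + x.length = L + (r - y.length) := by omega
            rw [he, Nat.add_mod_left]
            exact Nat.mod_eq_of_lt (by omega)
          rw [hmod, List.getD_append_right _ _ _ _ hry,
            List.getD_append _ _ _ _ (by omega : r - y.length < x.length)]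

lemma inse_upow [Inhabited A] (f : A → S) {u v : List A} {s t : S}
    (hu : wordProd f u = some s) (hv : wordProd f v = some t) :
    InSE f s t (upow u v) := by
  have hu0 : 0 < u.length := List.length_pos_iff.mpr (wordProd_ne_nil f hu)
  have hv0 : 0 < v.length := List.length_pos_iff.mpr (wordProd_ne_nil f hv)
  refine ⟨fun i => u.length + i * v.length, by simpa using hu0, ?_, ?_, fun i => ?_⟩
  · apply strictMono_nat_of_lt_succ
    intro n
    show u.length + n * v.length < u.length + (n+1) * v.length
    rw [Nat.succ_mul]
    omega
  · show wordProd f (seg (upow u v) 0 (u.length + 0 * v.length)) = some s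
    rw [show u.length + 0 * v.length = u.length by omega, seg_upow_prefix, hu]
  · show wordProd f (seg (upow u v) (u.length + i * v.length)
      (u.length + (i+1) * v.length)) = some t
    rw [show u.length + (i+1) * v.length = u.length + i * v.length + v.length by ring,
      seg_upow_block, hv]

end SRAux

/-- A surjective morphism `h : A⁺ → S` onto a finite semigroup strongly recognizes
`L ⊆ A^ω` iff for all `s, t ∈ S`, whenever `[s][t]^ω ∩ L ≠ ∅` then `[s][t]^ω ⊆ L`. -/
theorem strongly_recognizes_iff_saturates {A S : Type*} [Semigroup S] [Fintype S]
    (f : A → S) (hsurj : ∀ s : S, ∃ l : List A, wordProd f l = some s)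
    (L : Set (ℕ → A)) :
    StronglyRecognizes f L ↔
      ∀ s t : S, (∃ α, InSE f s t α ∧ α ∈ L) → ∀ α, InSE f s t α → α ∈ L := by
  classical
  constructor
  · rintro ⟨P, hlink, hconj, rfl⟩ s t ⟨α, hα, hαL⟩ β hβ
    obtain ⟨p, hp, hpα⟩ := hαL
    obtain ⟨N, hN⟩ := SRAux.exists_idem t
    have hlp : IsLinkedPair (s * SRAux.spow t N) (SRAux.spow t N) :=
      ⟨hN, by rw [mul_assoc, hN]⟩
    have hcα := SRAux.inse_canon f hα N
    have hcβ := SRAux.inse_canon f hβ N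
    have hcp : ConjPairs (p.1, p.2) (s * SRAux.spow t N, SRAux.spow t N) :=
      SRAux.conj_of_common f α (hlink p hp) hlp hpα hcα
    have hmem : (s * SRAux.spow t N, SRAux.spow t N) ∈ P := hconj p _ hp hlp hcp
    exact ⟨_, hmem, hcβ⟩
  · intro hsat
    refine ⟨{p : S × S | IsLinkedPair p.1 p.2 ∧ ∃ γ, InSE f p.1 p.2 γ ∧ γ ∈ L},
      fun p hp => hp.1, ?_, ?_⟩
    · rintro p q ⟨hpl, γ0, hγ0, hγ0L⟩ hql ⟨x, y, hx1, hx2, hx3⟩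
      obtain ⟨ws, hws⟩ := hsurj p.1
      obtain ⟨wx, hwx⟩ := hsurj x
      obtain ⟨wy, hwy⟩ := hsurj y
      haveI : Inhabited A := ⟨ws.head (SRAux.wordProd_ne_nil f hws)⟩
      refine ⟨hql, upow (ws ++ wx) (wy ++ wx), ?_, ?_⟩
      · exact SRAux.inse_upow f (by rw [SRAux.wordProd_append f hws hwx, hx1])
          (by rw [SRAux.wordProd_append f hwy hwx, hx3])
      · refine hsat p.1 p.2 ⟨γ0, hγ0, hγ0L⟩ _ ?_
        rw [SRAux.upow_shift]
        exact SRAux.inse_upow f hws (by rw [SRAux.wordProd_append f hwx hwy, hx2])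
    · ext α
      constructor
      · intro hαL
        obtain ⟨s, e, hlp, hse⟩ := SRAux.exists_linked_factorization f α
        exact ⟨(s, e), ⟨hlp, α, hse, hαL⟩, hse⟩
      · rintro ⟨p, ⟨hpl, β, hβ, hβL⟩, hα⟩
        exact hsat p.1 p.2 ⟨β, hβ, hβL⟩ α hα
end

section
/- Let h : A⁺ → S be a morphism to a finite semigroup, let (s,e) be a linked pair of S, and let u,v ∈ A⁺ with (h(u),h(v)) a linked pair. Then u v^ω ∈ [s][e]^ω if and only if there exists a factorization v = v₁v₂ with v₁ ≠ ε, h(u v₁) = s, and h(v₂ v v₁) = e. -/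
namespace LpfacAux

variable {A S : Type*} [Semigroup S]

/-- The product of a word in `WithOne S`. -/
def p (f : A → S) (l : List A) : WithOne S := (l.map fun a => ((f a : S) : WithOne S)).prod

lemma p_nil (f : A → S) : p f [] = 1 := rfl

lemma p_append (f : A → S) (l1 l2 : List A) : p f (l1 ++ l2) = p f l1 * p f l2 := by
  simp [p]

lemma p_cons' (f : A → S) (a : A) (l : List A) : p f (a :: l) = ↑(f a) * p f l := by simp [p]

lemma foldl_mul (f : A → S) (x c : S) (l : List A) :
    l.foldl (fun s b => s * f b) (x * c) = x * l.foldl (fun s b => s * f b) c := by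
  induction l generalizing c with
  | nil => rfl
  | cons b t ih => simp only [List.foldl_cons, mul_assoc, ih]

lemma p_cons (f : A → S) (a : A) (t : List A) :
    p f (a :: t) = ((t.foldl (fun s b => s * f b) (f a) : S) : WithOne S) := by
  induction t generalizing a with
  | nil => simp [p]
  | cons b t ih =>
    rw [p_cons', ih, ← WithOne.coe_mul, List.foldl_cons, foldl_mul]

lemma wordProd_eq_iff (f : A → S) (l : List A) (x : S) :
    wordProd f l = some x ↔ p f l = (x : WithOne S) := by
  cases l with
  | nil =>
    simp only [wordProd, p_nil]
    constructor
    · intro h; exact absurd h (by simp)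
    · intro h; exact absurd h.symm (WithOne.coe_ne_one)
  | cons a t =>
    rw [p_cons, wordProd, Option.some_inj, WithOne.coe_inj]

lemma seg_length {A : Type*} (α : ℕ → A) (i j : ℕ) : (seg α i j).length = j - i := by simp [seg]

lemma seg_append {A : Type*} (α : ℕ → A) {i j k : ℕ} (hij : i ≤ j) (hjk : j ≤ k) :
    seg α i j ++ seg α j k = seg α i k := by
  unfold seg
  have h : k - i = (j - i) + (k - j) := by omega
  rw [h, List.range_add, List.map_append, List.map_map]
  congr 1
  apply List.map_congr_left
  intro m hm
  simp only [Function.comp_apply]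
  congr 1
  omega

lemma seg_eq_list {A : Type*} (α : ℕ → A) (i j : ℕ) (l : List A) (hlen : j - i = l.length)
    (h : ∀ m (hm : m < l.length), α (i + m) = l[m]) : seg α i j = l := by
  apply List.ext_getElem
  · simp [seg, hlen]
  · intro n h1 h2
    simp only [seg, List.getElem_map, List.getElem_range]
    exact h n h2

lemma seg_self {A : Type*} (α : ℕ → A) (i : ℕ) : seg α i i = [] := by
  simp [seg]

section upowlem

variable {A : Type*} [Inhabited A]

/-- The periodic tail. -/
def beta (v : List A) : ℕ → A := fun n => v.getD (n % v.length) default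

lemma seg_upow_prefix (u v : List A) : seg (upow u v) 0 u.length = u := by
  apply seg_eq_list
  · simp
  · intro m hm
    simp only [Nat.zero_add, upow, if_pos hm]
    exact List.getD_eq_getElem u default hm

lemma seg_upow_shift (u v : List A) (a b : ℕ) :
    seg (upow u v) (u.length + a) (u.length + b) = seg (beta v) a b := by
  unfold seg
  have h : u.length + b - (u.length + a) = b - a := by omega
  rw [h]
  apply List.map_congr_left
  intro m hm
  have h1 : ¬ (u.length + a + m < u.length) := by omega
  simp only [upow, if_neg h1, beta]
  congr 2
  omega

lemma seg_beta_take (v : List A) (hv : v ≠ []) (q r : ℕ) (hr : r ≤ v.length) :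
    seg (beta v) (q * v.length) (q * v.length + r) = v.take r := by
  have hL : 0 < v.length := List.length_pos_iff.mpr hv
  apply seg_eq_list
  · simp; omega
  · intro m hm
    have hm' : m < r := by simp [List.length_take] at hm; omega
    have hmlt : m < v.length := by omega
    have hmod : (q * v.length + m) % v.length = m := by
      rw [Nat.mul_comm q v.length, Nat.mul_add_mod, Nat.mod_eq_of_lt hmlt]
    simp only [beta, hmod]
    rw [List.getD_eq_getElem v default hmlt, List.getElem_take]

lemma seg_beta_drop (v : List A) (hv : v ≠ []) (q r : ℕ) (hr : r ≤ v.length) :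
    seg (beta v) (q * v.length + r) ((q + 1) * v.length) = v.drop r := by
  have hL : 0 < v.length := List.length_pos_iff.mpr hv
  apply seg_eq_list
  · simp [Nat.add_mul]; omega
  · intro m hm
    have hm' : m < v.length - r := by simp at hm; omega
    have hmlt : r + m < v.length := by omega
    have hmod : (q * v.length + r + m) % v.length = r + m := by
      rw [Nat.add_assoc, Nat.mul_comm q v.length, Nat.mul_add_mod, Nat.mod_eq_of_lt hmlt]
    simp only [beta, hmod]
    rw [List.getD_eq_getElem v default hmlt, List.getElem_drop]

lemma seg_beta_full (v : List A) (hv : v ≠ []) (q : ℕ) :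
    seg (beta v) (q * v.length) ((q + 1) * v.length) = v := by
  have := seg_beta_take v hv q v.length le_rfl
  rw [List.take_length] at this
  have h2 : (q + 1) * v.length = q * v.length + v.length := by ring
  rw [h2]
  exact this

end upowlem

/-- `↑x * ↑y^k = ↑x` whenever `x * y = x`. -/
lemma coe_mul_pow (x y : S) (h : x * y = x) (k : ℕ) :
    (x : WithOne S) * (y : WithOne S) ^ k = (x : WithOne S) := by
  induction k with
  | zero => simp
  | succ k ih => rw [pow_succ, ← mul_assoc, ih, ← WithOne.coe_mul, h]

/-- `↑y^k = ↑y` whenever `y * y = y` and `k ≥ 1`. -/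
lemma pow_idem (y : S) (h : y * y = y) (k : ℕ) (hk : 0 < k) :
    (y : WithOne S) ^ k = (y : WithOne S) := by
  induction k with
  | zero => omega
  | succ k ih =>
    rcases Nat.eq_zero_or_pos k with hk0 | hk0
    · subst hk0; simp
    · rw [pow_succ, ih hk0, ← WithOne.coe_mul, h]

/-- Products of β-power segments. -/
lemma p_beta_pow {A : Type*} [Inhabited A] (f : A → S) (v : List A) (hv : v ≠ []) (sv : S)
    (hpv : p f v = (sv : WithOne S)) (q m : ℕ) :
    p f (seg (beta v) (q * v.length) ((q + m) * v.length)) = (sv : WithOne S) ^ m := by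
  induction m with
  | zero => rw [Nat.add_zero, seg_self, p_nil, pow_zero]
  | succ m ih =>
    have hL : 0 < v.length := List.length_pos_iff.mpr hv
    have h1 : q * v.length ≤ (q + m) * v.length := Nat.mul_le_mul_right _ (by omega)
    have h2 : (q + m) * v.length ≤ (q + (m + 1)) * v.length := Nat.mul_le_mul_right _ (by omega)
    rw [← seg_append (beta v) h1 h2, p_append, ih]
    have h3 : (q + (m + 1)) * v.length = ((q + m) + 1) * v.length := by ring_nf
    rw [h3, seg_beta_full v hv (q + m), hpv, pow_succ]

lemma strictMono_gap {c : ℕ → ℕ} (hc : StrictMono c) (m k : ℕ) : c m + k ≤ c (m + k) := by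
  induction k with
  | zero => simp
  | succ k ih =>
    have h2 := hc (show m + k < m + (k + 1) by omega)
    omega

end LpfacAux

open LpfacAux

/-- Lemma 4 (lpfac): for linked pairs `(s,e)` and `(h(u), h(v))`, the word `u v^ω`
lies in `[s][e]^ω` iff `v = v₁ v₂` with `v₁ ≠ ε`, `h(u v₁) = s` and `h(v₂ v v₁) = e`. -/
theorem upow_mem_iff_factorization {A S : Type*} [Inhabited A] [Semigroup S] [Fintype S]
    (f : A → S) (u v : List A) (hu : u ≠ []) (hv : v ≠ [])
    (s e su sv : S) (hse : IsLinkedPair s e)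
    (hhu : wordProd f u = some su) (hhv : wordProd f v = some sv)
    (huv : IsLinkedPair su sv) :
    InSE f s e (upow u v) ↔
      ∃ v₁ v₂ : List A, v = v₁ ++ v₂ ∧ v₁ ≠ [] ∧
        wordProd f (u ++ v₁) = some s ∧ wordProd f (v₂ ++ v ++ v₁) = some e := by
  set L := v.length with hLdef
  have hL : 0 < L := List.length_pos_iff.mpr hv
  have hU : 0 < u.length := List.length_pos_iff.mpr hu
  set α := upow u v with hα
  obtain ⟨hee, hses⟩ := hse
  obtain ⟨hvv, huvu⟩ := huv
  have hpu : p f u = (su : WithOne S) := (wordProd_eq_iff f u su).mp hhu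
  have hpv : p f v = (sv : WithOne S) := (wordProd_eq_iff f v sv).mp hhv
  constructor
  · -- forward direction
    rintro ⟨c, hc0, hcmono, hcs, hce⟩
    -- products of prefixes and intervals
    have hps : ∀ i, p f (seg α 0 (c i)) = (s : WithOne S) := by
      intro i
      induction i with
      | zero => exact (wordProd_eq_iff f _ s).mp hcs
      | succ i ih =>
        have h1 : (0:ℕ) ≤ c i := Nat.zero_le _
        have h2 : c i ≤ c (i + 1) := le_of_lt (hcmono (Nat.lt_succ_self i))
        rw [← seg_append α h1 h2, p_append, ih,
          (wordProd_eq_iff f _ e).mp (hce i), ← WithOne.coe_mul, hses]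
    have hpe : ∀ i j, i < j → p f (seg α (c i) (c j)) = (e : WithOne S) := by
      intro i j hij
      induction j with
      | zero => omega
      | succ j ih =>
        rcases Nat.lt_or_ge i j with h | h
        · have h1 : c i ≤ c j := le_of_lt (hcmono h)
          have h2 : c j ≤ c (j + 1) := le_of_lt (hcmono (Nat.lt_succ_self j))
          rw [← seg_append α h1 h2, p_append, ih h,
            (wordProd_eq_iff f _ e).mp (hce j), ← WithOne.coe_mul, hee]
        · have : i = j := by omega
          subst this
          exact (wordProd_eq_iff f _ e).mp (hce i)
    -- pigeonhole to find two indices with same residue mod L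
    have hnotinj : ¬ Function.Injective
        (fun n : Fin (L + 1) => (⟨c (u.length + 2 * L * n) % L, Nat.mod_lt _ hL⟩ : Fin L)) := by
      intro hinj
      have := Fintype.card_le_of_injective _ hinj
      simp at this
    obtain ⟨n₁', n₂', hfeq, hne⟩ := Function.not_injective_iff.mp hnotinj
    -- wlog n₁ < n₂
    obtain ⟨n₁, n₂, hn12, hres⟩ : ∃ n₁ n₂ : Fin (L + 1), (n₁ : ℕ) < n₂ ∧
        c (u.length + 2 * L * n₁) % L = c (u.length + 2 * L * n₂) % L := by
      rcases lt_or_gt_of_ne hne with h | h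
      · exact ⟨n₁', n₂', h, congrArg Fin.val hfeq⟩
      · exact ⟨n₂', n₁', h, (congrArg Fin.val hfeq).symm⟩
    set i₁ : ℕ := u.length + 2 * L * n₁ with hi₁
    set i₂ : ℕ := u.length + 2 * L * n₂ with hi₂
    set a := c i₁ with ha
    set b := c i₂ with hb
    have hi12 : i₁ < i₂ := by
      have h3 : 2 * L * (n₁:ℕ) < 2 * L * (n₂:ℕ) :=
        Nat.mul_lt_mul_of_pos_left hn12 (by omega)
      omega
    have hau : u.length ≤ a := le_trans (by omega : u.length ≤ i₁) hcmono.le_apply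
    have hgap : a + 2 * L ≤ b := by
      have h1 : c i₁ + (i₂ - i₁) ≤ c i₂ := by
        have := strictMono_gap hcmono i₁ (i₂ - i₁)
        rwa [Nat.add_sub_cancel' (le_of_lt hi12)] at this
      have h2 : 2 * L ≤ i₂ - i₁ := by
        have h4 : 2 * L * ((n₁:ℕ) + 1) ≤ 2 * L * (n₂:ℕ) :=
          Nat.mul_le_mul_left _ (by omega)
        have h5 : 2 * L * ((n₁:ℕ) + 1) = 2 * L * (n₁:ℕ) + 2 * L := Nat.mul_succ _ _
        omega
      omega
    have hdvd : L ∣ (b - a) := (Nat.modEq_iff_dvd' (by omega)).mp hres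
    obtain ⟨t, ht⟩ := hdvd
    have ht2 : 2 ≤ t := by
      by_contra h
      have h6 : t ≤ 1 := by omega
      have h7 : L * t ≤ L * 1 := Nat.mul_le_mul_left _ h6
      have h8 : L * 1 = L := Nat.mul_one _
      omega
    set D := a - u.length with hD
    set k := D / L with hk
    set r := D % L with hr
    have hrL : r < L := Nat.mod_lt _ hL
    have haDecomp : a = u.length + (k * L + r) := by
      have h9 := Nat.div_add_mod D L
      rw [← hk, ← hr] at h9
      have h10 : L * k = k * L := Nat.mul_comm _ _
      omega
    set m := t - 1 with hm
    have hm1 : 1 ≤ m := by omega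
    have hbDecomp : b = u.length + ((k + 1 + m) * L + r) := by
      have hab : a ≤ b := by omega
      have hbeq : b = a + L * t := by omega
      have ht' : t = 1 + m := by omega
      have hexp : (k + 1 + m) * L = k * L + L * t := by rw [ht']; ring
      rw [hbeq, haDecomp]
      omega
    -- product of prefix: ↑s = ↑su * sv^k * p(take r)
    have hsplitA : p f (seg α 0 a) = ↑su * ((sv : WithOne S)) ^ k * p f (v.take r) := by
      have e1 : seg α 0 a = seg α 0 u.length ++ seg α u.length a :=
        (seg_append α (Nat.zero_le _) hau).symm
      have e2 : seg α u.length a = seg (beta v) 0 (k * L + r) := by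
        rw [haDecomp]
        simpa using seg_upow_shift u v 0 (k * L + r)
      have e3 : seg (beta v) 0 (k * L + r)
          = seg (beta v) 0 (k * L) ++ seg (beta v) (k * L) (k * L + r) :=
        (seg_append _ (Nat.zero_le _) (Nat.le_add_right _ _)).symm
      have e4 : p f (seg (beta v) 0 (k * L)) = ((sv : WithOne S)) ^ k := by
        have := p_beta_pow f v hv sv hpv 0 k
        simpa using this
      have e5 : seg (beta v) (k * L) (k * L + r) = v.take r :=
        seg_beta_take v hv k r (le_of_lt hrL)
      rw [e1, e2, e3, p_append, p_append, e4, e5, seg_upow_prefix, hpu, mul_assoc]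
    have hsA : (↑su * p f (v.take r) : WithOne S) = (s : WithOne S) := by
      have := hps i₁
      rw [← ha] at this
      rw [hsplitA, coe_mul_pow su sv huvu k] at this
      exact this
    -- product of the interval: ↑e = p(drop r) * ↑sv * p(take r)
    have hsplitB : p f (seg α a b) = p f (v.drop r) * (sv : WithOne S) * p f (v.take r) := by
      have e1 : seg α a b = seg (beta v) (k * L + r) ((k + 1 + m) * L + r) := by
        rw [haDecomp, hbDecomp]
        exact seg_upow_shift u v _ _
      have m1 : k * L + r ≤ (k + 1) * L := by
        have : (k + 1) * L = k * L + L := by ring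
        omega
      have m2 : (k + 1) * L ≤ (k + 1 + m) * L := Nat.mul_le_mul_right _ (by omega)
      have m3 : (k + 1 + m) * L ≤ (k + 1 + m) * L + r := Nat.le_add_right _ _
      have e2 : seg (beta v) (k * L + r) ((k + 1 + m) * L + r)
          = seg (beta v) (k * L + r) ((k + 1) * L)
            ++ seg (beta v) ((k + 1) * L) ((k + 1 + m) * L)
            ++ seg (beta v) ((k + 1 + m) * L) ((k + 1 + m) * L + r) := by
        rw [seg_append _ m1 m2, seg_append _ (le_trans m1 m2) m3]
      have e3 : seg (beta v) (k * L + r) ((k + 1) * L) = v.drop r :=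
        seg_beta_drop v hv k r (le_of_lt hrL)
      have e4 : p f (seg (beta v) ((k + 1) * L) ((k + 1 + m) * L)) = ((sv : WithOne S)) ^ m :=
        p_beta_pow f v hv sv hpv (k + 1) m
      have e5 : seg (beta v) ((k + 1 + m) * L) ((k + 1 + m) * L + r) = v.take r :=
        seg_beta_take v hv (k + 1 + m) r (le_of_lt hrL)
      rw [e1, e2, p_append, p_append, e3, e4, e5, pow_idem sv hvv m hm1]
    have heB : p f (v.drop r) * (sv : WithOne S) * p f (v.take r) = (e : WithOne S) := by
      have := hpe i₁ i₂ hi12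
      rw [← ha, ← hb, hsplitB] at this
      exact this
    -- now produce the factorization
    rcases Nat.eq_zero_or_pos r with hr0 | hrpos
    · -- r = 0 : v₁ = v, v₂ = []
      refine ⟨v, [], (List.append_nil v).symm, hv, ?_, ?_⟩
      · rw [wordProd_eq_iff, p_append, hpu, hpv]
        rw [hr0] at hsA
        simp only [List.take_zero, p_nil, mul_one] at hsA
        rw [← hsA, ← WithOne.coe_mul, huvu]
      · rw [wordProd_eq_iff]
        rw [hr0] at heB
        simp only [List.take_zero, List.drop_zero, p_nil, mul_one, hpv] at heB
        have : p f (([] : List A) ++ v ++ v) = ↑sv * ↑sv := by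
          simp only [List.nil_append, p_append]
          rw [hpv]
        rw [this, heB]
    · -- r > 0 : v₁ = take r, v₂ = drop r
      refine ⟨v.take r, v.drop r, (List.take_append_drop r v).symm, ?_, ?_, ?_⟩
      · intro h
        have h13 : (v.take r).length = 0 := by rw [h]; rfl
        rw [List.length_take] at h13
        omega
      · rw [wordProd_eq_iff, p_append, hpu]
        exact hsA
      · rw [wordProd_eq_iff, p_append, p_append, hpv]
        exact heB
  · -- backward direction
    rintro ⟨v₁, v₂, hsplit, hne, h1, h2⟩
    set r := v₁.length with hrdef
    have hrpos : 0 < r := List.length_pos_iff.mpr hne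
    have hrle : r ≤ L := by
      have h11 := congrArg List.length hsplit
      rw [List.length_append] at h11
      omega
    refine ⟨fun i => u.length + r + 2 * L * i,
      (by show 0 < u.length + r + 2 * L * 0; omega), ?_, ?_, ?_⟩
    · -- strict mono
      intro x y hxy
      show u.length + r + 2 * L * x < u.length + r + 2 * L * y
      have h12 : 2 * L * x < 2 * L * y := Nat.mul_lt_mul_of_pos_left hxy (by omega)
      omega
    · -- prefix
      have e1 : seg α 0 (u.length + r + 2 * L * 0) = u ++ v₁ := by
        have h0 : u.length + r + 2 * L * 0 = u.length + r := by ring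
        rw [h0, ← seg_append α (Nat.zero_le u.length) (Nat.le_add_right _ _),
          seg_upow_prefix]
        congr 1
        have := seg_beta_take v hv 0 r hrle
        simp only [Nat.zero_mul, Nat.zero_add] at this
        have h3 : seg α u.length (u.length + r) = seg (beta v) 0 r := seg_upow_shift u v 0 r
        rw [h3, this, hsplit, List.take_left]
      show wordProd f (seg α 0 (u.length + r + 2 * L * 0)) = some s
      rw [e1]
      exact h1
    · -- periodic segments
      intro i
      have e1 : seg α (u.length + r + 2 * L * i) (u.length + r + 2 * L * (i + 1))
          = v₂ ++ v ++ v₁ := by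
        have ha1 : u.length + r + 2 * L * i = u.length + ((2 * i) * L + r) := by ring
        have ha2 : u.length + r + 2 * L * (i + 1) = u.length + ((2 * i + 2) * L + r) := by ring
        rw [ha1, ha2, seg_upow_shift u v ((2 * i) * L + r) ((2 * i + 2) * L + r)]
        have m1 : (2 * i) * L + r ≤ (2 * i + 1) * L := by
          have : (2 * i + 1) * L = (2 * i) * L + L := by ring
          omega
        have m2 : (2 * i + 1) * L ≤ (2 * i + 2) * L := Nat.mul_le_mul_right _ (by omega)
        have m3 : (2 * i + 2) * L ≤ (2 * i + 2) * L + r := Nat.le_add_right _ _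
        rw [← seg_append _ (le_trans m1 m2) m3, ← seg_append _ m1 m2]
        have e3 : seg (beta v) ((2 * i) * L + r) ((2 * i + 1) * L) = v₂ := by
          have := seg_beta_drop v hv (2 * i) r hrle
          rw [this, hsplit, List.drop_left]
        have e4 : seg (beta v) ((2 * i + 1) * L) ((2 * i + 2) * L) = v := by
          have := seg_beta_full v hv (2 * i + 1)
          have h5 : (2 * i + 1 + 1) * L = (2 * i + 2) * L := by ring
          rwa [h5] at this
        have e5 : seg (beta v) ((2 * i + 2) * L) ((2 * i + 2) * L + r) = v₁ := by
          have := seg_beta_take v hv (2 * i + 2) r hrle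
          rw [this, hsplit, List.take_left]
        rw [e3, e4, e5]
      show wordProd f
        (seg α (u.length + r + 2 * L * i) (u.length + r + 2 * L * (i + 1))) = some e
      rw [e1]
      exact h2
end

section
/- For every infinite word α ∈ A^ω and every morphism h : A⁺ → S onto a finite semigroup, there exists a linked pair (s,e) of S such that α ∈ [s][e]^ω. -/
-- word product valued in WithOne S
def wp {A S : Type*} [Semigroup S] (f : A → S) (l : List A) : WithOne S :=
  (l.map (fun a => (f a : WithOne S))).prod

lemma wp_foldl {A S : Type*} [Semigroup S] (f : A → S) (l : List A) (x : S) :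
    (x : WithOne S) * wp f l = ((l.foldl (fun s b => s * f b) x : S) : WithOne S) := by
  induction l generalizing x with
  | nil => simp [wp]
  | cons b l ih =>
      simp only [wp, List.map_cons, List.prod_cons, List.foldl_cons, ← mul_assoc,
        ← WithOne.coe_mul] at *
      exact ih (x * f b)

lemma wordProd_eq_wp {A S : Type*} [Semigroup S] (f : A → S) (l : List A) :
    wordProd f l = wp f l := by
  cases l with
  | nil => rfl
  | cons a l =>
      rw [show wp f (a::l) = (f a : WithOne S) * wp f l from by simp [wp], wp_foldl]
      rfl

lemma seg_append {A : Type*} (α : ℕ → A) {i j k : ℕ} (hij : i ≤ j) (hjk : j ≤ k) :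
    seg α i j ++ seg α j k = seg α i k := by
  unfold seg
  have h : k - i = (j - i) + (k - j) := by omega
  rw [h, List.range_add, List.map_append, List.map_map]
  congr 1
  apply List.map_congr_left
  intro x _
  simp only [Function.comp_apply]
  congr 1
  omega

lemma wp_seg_mul {A S : Type*} [Semigroup S] (f : A → S) (α : ℕ → A) {i j k : ℕ}
    (hij : i ≤ j) (hjk : j ≤ k) :
    wp f (seg α i j) * wp f (seg α j k) = wp f (seg α i k) := by
  unfold wp
  rw [← seg_append α hij hjk, List.map_append, List.prod_append]

lemma seg_ne_nil {A : Type*} (α : ℕ → A) {i j : ℕ} (hij : i < j) : seg α i j ≠ [] := by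
  unfold seg
  simp only [ne_eq, List.map_eq_nil_iff, List.range_eq_nil]
  omega

lemma wp_some {A S : Type*} [Semigroup S] (f : A → S) {l : List A} (h : l ≠ []) :
    ∃ s : S, wp f l = (s : WithOne S) := by
  cases l with
  | nil => exact absurd rfl h
  | cons a l =>
      refine ⟨l.foldl (fun s b => s * f b) (f a), ?_⟩
      rw [← wordProd_eq_wp]; rfl

-- pigeonhole
lemma pigeon {κ : Type*} [Finite κ] (X : Set ℕ) (hX : X.Infinite) (g : ℕ → κ) :
    ∃ v, {n | n ∈ X ∧ g n = v}.Infinite := by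
  by_contra h
  push_neg at h
  have hsub : X ⊆ ⋃ v, {n | n ∈ X ∧ g n = v} := fun n hn => Set.mem_iUnion.2 ⟨g n, hn, rfl⟩
  exact hX ((Set.finite_iUnion h).subset hsub)

lemma ramsey_step {κ : Type*} [Finite κ] (c : ℕ → ℕ → κ) (X : Set ℕ) (hX : X.Infinite) :
    ∃ (a : ℕ) (Y : Set ℕ), a ∈ X ∧ Y ⊆ X ∧ Y.Infinite ∧ (∀ n ∈ Y, a < n) ∧
      (∀ m ∈ Y, ∀ n ∈ Y, c a m = c a n) := by
  obtain ⟨a, ha⟩ := hX.nonempty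
  have hX' : (X ∩ Set.Ioi a).Infinite := by
    have h1 := hX.diff (Set.finite_Iic a)
    apply h1.mono
    intro n hn
    simp only [Set.mem_diff, Set.mem_Iic, not_le] at hn
    exact ⟨hn.1, hn.2⟩
  obtain ⟨v, hv⟩ := pigeon _ hX' (c a)
  refine ⟨a, {n | n ∈ X ∩ Set.Ioi a ∧ c a n = v}, ha, fun n hn => hn.1.1, hv, fun n hn => hn.1.2,
    fun m hm n hn => hm.2.trans hn.2.symm⟩

/-- Infinite Ramsey for pairs, finitely many colors. -/
lemma ramsey_pairs {κ : Type*} [Finite κ] (c : ℕ → ℕ → κ) :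
    ∃ (b : ℕ → ℕ) (e : κ), StrictMono b ∧ ∀ m n, m < n → c (b m) (b n) = e := by
  classical
  -- step function on infinite sets
  let F : {X : Set ℕ // X.Infinite} → ℕ × {X : Set ℕ // X.Infinite} := fun X =>
    ⟨(ramsey_step c X.1 X.2).choose,
      ⟨(ramsey_step c X.1 X.2).choose_spec.choose,
        (ramsey_step c X.1 X.2).choose_spec.choose_spec.2.2.1⟩⟩
  have hF : ∀ X : {X : Set ℕ // X.Infinite},
      (F X).1 ∈ X.1 ∧ (F X).2.1 ⊆ X.1 ∧ (∀ n ∈ (F X).2.1, (F X).1 < n) ∧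
        (∀ m ∈ (F X).2.1, ∀ n ∈ (F X).2.1, c (F X).1 m = c (F X).1 n) := fun X =>
    ⟨(ramsey_step c X.1 X.2).choose_spec.choose_spec.1,
     (ramsey_step c X.1 X.2).choose_spec.choose_spec.2.1,
     (ramsey_step c X.1 X.2).choose_spec.choose_spec.2.2.2.1,
     (ramsey_step c X.1 X.2).choose_spec.choose_spec.2.2.2.2⟩
  let g : ℕ → ℕ × {X : Set ℕ // X.Infinite} := fun n =>
    Nat.rec (0, ⟨Set.univ, Set.infinite_univ⟩) (fun _ p => F p.2) n
  have hg : ∀ n, g (n + 1) = F (g n).2 := fun n => rfl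
  let a : ℕ → ℕ := fun n => (g (n + 1)).1
  let X : ℕ → Set ℕ := fun n => ((g n).2 : Set ℕ)
  have ha_mem : ∀ n, a n ∈ X n := fun n => (hF (g n).2).1
  have hX_sub : ∀ n, X (n + 1) ⊆ X n := fun n => (hF (g n).2).2.1
  have hlt : ∀ n, ∀ m ∈ X (n + 1), a n < m := fun n => (hF (g n).2).2.2.1
  have hcol : ∀ n, ∀ m ∈ X (n + 1), ∀ m' ∈ X (n + 1), c (a n) m = c (a n) m' :=
    fun n => (hF (g n).2).2.2.2
  -- X is antitone
  have hX_le : ∀ {k j : ℕ}, k ≤ j → X j ⊆ X k := by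
    intro k j hkj
    induction j with
    | zero => simp_all
    | succ j ih =>
        rcases Nat.lt_or_ge k (j+1) with h | h
        · exact (hX_sub j).trans (ih (by omega))
        · have : k = j + 1 := by omega
          subst this; exact fun _ h => h
  have ha_in : ∀ {k j : ℕ}, k < j → a j ∈ X (k + 1) := fun {k j} hkj =>
    hX_le (k := k + 1) (j := j) (by omega) (ha_mem j)
  have ha_mono : StrictMono a := strictMono_nat_of_lt_succ fun n =>
    hlt n (a (n+1)) (ha_in (Nat.lt_succ_self n))
  have hc : ∀ {k j : ℕ}, k < j → c (a k) (a j) = c (a k) (a (k + 1)) := fun {k j} hkj =>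
    hcol k _ (ha_in hkj) _ (ha_in (Nat.lt_succ_self k))
  -- pigeonhole on the colors d k := c (a k) (a (k+1))
  obtain ⟨e, he⟩ := pigeon Set.univ Set.infinite_univ (fun k => c (a k) (a (k + 1)))
  have he' : {k | c (a k) (a (k + 1)) = e}.Infinite := by
    apply he.mono; intro k hk; exact hk.2
  refine ⟨fun n => a (Nat.nth (fun k => c (a k) (a (k + 1)) = e) n), e,
    ha_mono.comp (Nat.nth_strictMono he'), fun m n hmn => ?_⟩
  rw [hc (Nat.nth_strictMono he' hmn)]
  exact Nat.nth_mem_of_infinite he' m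

/-- Ramsey-type factorization: every infinite word lies in `[s][e]^ω` for some
linked pair `(s,e)` of the finite semigroup `S`. -/
theorem exists_linked_pair_factorization {A S : Type*} [Semigroup S] [Fintype S]
    (f : A → S) (α : ℕ → A) :
    ∃ s e : S, IsLinkedPair s e ∧ InSE f s e α := by
  haveI : Finite (WithOne S) := inferInstanceAs (Finite (Option S))
  obtain ⟨b, E, hb, hE⟩ := ramsey_pairs (fun i j => wp f (seg α i j))
  have hb01 : b 0 < b 1 := hb Nat.zero_lt_one
  have hb12 : b 1 < b 2 := hb Nat.one_lt_two
  have hEE : E * E = E := by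
    calc E * E = wp f (seg α (b 0) (b 1)) * wp f (seg α (b 1) (b 2)) := by
          rw [hE 0 1 Nat.zero_lt_one, hE 1 2 Nat.one_lt_two]
      _ = wp f (seg α (b 0) (b 2)) := wp_seg_mul f α hb01.le hb12.le
      _ = E := hE 0 2 (by omega)
  have h01 : 0 < b 1 := by omega
  obtain ⟨e, he⟩ := wp_some f (seg_ne_nil α hb12)
  obtain ⟨s, hs⟩ := wp_some f (seg_ne_nil α h01)
  have hsE : wp f (seg α 0 (b 1)) = wp f (seg α 0 (b 0)) * E := by
    rw [← hE 0 1 Nat.zero_lt_one, wp_seg_mul f α (Nat.zero_le _) (le_of_lt hb01)]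
  have hsEs : wp f (seg α 0 (b 1)) * E = wp f (seg α 0 (b 1)) := by
    rw [hsE, mul_assoc, hEE]
  have heE : E = (e : WithOne S) := by rw [← hE 1 2 Nat.one_lt_two]; exact he
  have hee : e * e = e := by
    have : ((e * e : S) : WithOne S) = (e : WithOne S) := by
      rw [WithOne.coe_mul, ← heE, hEE, heE]
    exact WithOne.coe_inj.mp this
  have hse : s * e = s := by
    have : ((s * e : S) : WithOne S) = (s : WithOne S) := by
      rw [WithOne.coe_mul, ← heE, ← hs, hsEs, hs]
    exact WithOne.coe_inj.mp this
  refine ⟨s, e, ⟨hee, hse⟩, fun n => b (n + 1), h01, fun m n hmn => hb (by omega), ?_, ?_⟩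
  · exact (wordProd_eq_wp f _).trans hs
  · intro i
    exact (wordProd_eq_wp f _).trans ((hE (i + 1) (i + 2) (by omega)).trans heE)
end

section
/- Let h : A⁺ → S strongly recognize L ⊆ A^ω via a set P of linked pairs closed under conjugation. Then h also strongly recognizes the complement A^ω \ L, namely A^ω \ L = [P'] where P' is the set of linked pairs not in P, and P' is closed under conjugation. -/
namespace CSRaux

variable {A S : Type*} [Semigroup S]

/-! ### Word products valued in `WithOne S` -/

/-- Word product valued in `WithOne S`. -/
def F (f : A → S) (l : List A) : WithOne S := (l.map fun a => ((f a : S) : WithOne S)).prod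

lemma F_nil (f : A → S) : F f ([] : List A) = 1 := rfl

lemma F_append (f : A → S) (l m : List A) : F f (l ++ m) = F f l * F f m := by
  simp [F]

lemma foldl_coe (f : A → S) : ∀ (l : List A) (x : S),
    ((l.foldl (fun s b => s * f b) x : S) : WithOne S) = (x : WithOne S) * F f l
  | [], x => by simp [F]
  | b :: l, x => by
    rw [List.foldl_cons, foldl_coe f l (x * f b)]
    simp only [F, List.map_cons, List.prod_cons, WithOne.coe_mul, mul_assoc]

lemma F_cons (f : A → S) (a : A) (l : List A) :
    F f (a :: l) = ((l.foldl (fun s b => s * f b) (f a) : S) : WithOne S) := by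
  rw [foldl_coe]
  simp only [F, List.map_cons, List.prod_cons]

lemma wordProd_iff (f : A → S) (l : List A) (s : S) :
    wordProd f l = some s ↔ F f l = (s : WithOne S) := by
  cases l with
  | nil => simp [wordProd, F_nil, (WithOne.coe_ne_one (a := s)).symm]
  | cons a l =>
    rw [wordProd, F_cons, Option.some_inj, WithOne.coe_inj]

/-! ### Segments -/

lemma seg_self (α : ℕ → A) (i : ℕ) : seg α i i = [] := by
  simp [seg]

lemma seg_succ (α : ℕ → A) {i k : ℕ} (h : i ≤ k) :
    seg α i (k + 1) = seg α i k ++ [α k] := by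
  unfold seg
  rw [show k + 1 - i = (k - i) + 1 by omega, List.range_succ, List.map_append]
  congr 1
  simp only [List.map_cons, List.map_nil]
  congr 2
  omega

lemma seg_append (α : ℕ → A) {i j k : ℕ} (h1 : i ≤ j) (h2 : j ≤ k) :
    seg α i j ++ seg α j k = seg α i k := by
  induction k, h2 using Nat.le_induction with
  | base => rw [seg_self, List.append_nil]
  | succ k hk ih =>
    rw [seg_succ α (h1.trans hk), seg_succ α hk, ← List.append_assoc, ih]

lemma seg_ne_nil (α : ℕ → A) {i j : ℕ} (h : i < j) : seg α i j ≠ [] := by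
  have hlen : (seg α i j).length = j - i := by simp [seg]
  intro hc
  rw [hc] at hlen
  simp at hlen
  omega

/-- The product of the segment `α[i..j)` in `WithOne S`. -/
def segP (f : A → S) (α : ℕ → A) (i j : ℕ) : WithOne S := F f (seg α i j)

lemma segP_mul (f : A → S) (α : ℕ → A) {i j k : ℕ} (h1 : i ≤ j) (h2 : j ≤ k) :
    segP f α i k = segP f α i j * segP f α j k := by
  rw [segP, segP, segP, ← seg_append α h1 h2, F_append]

lemma segP_coe (f : A → S) (α : ℕ → A) {i j : ℕ} (h : i < j) :
    ∃ x : S, segP f α i j = (x : WithOne S) := by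
  obtain ⟨a, l, hl⟩ := List.exists_cons_of_ne_nil (seg_ne_nil α h)
  exact ⟨_, by rw [segP, hl, F_cons]⟩

lemma wordProd_seg_iff (f : A → S) (α : ℕ → A) (i j : ℕ) (s : S) :
    wordProd f (seg α i j) = some s ↔ segP f α i j = (s : WithOne S) :=
  wordProd_iff f _ s

section cuts
variable (f : A → S) (α : ℕ → A) {c : ℕ → ℕ} {s e : S}

lemma prefix_const (hse : s * e = s) (hc : StrictMono c)
    (h0 : segP f α 0 (c 0) = (s : WithOne S))
    (hb : ∀ i, segP f α (c i) (c (i + 1)) = (e : WithOne S)) :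
    ∀ m, segP f α 0 (c m) = (s : WithOne S) := by
  intro m
  induction m with
  | zero => exact h0
  | succ m ih =>
    rw [segP_mul f α (Nat.zero_le (c m)) (hc (Nat.lt_succ_self m)).le, ih, hb,
      ← WithOne.coe_mul, hse]

lemma block_const (hee : e * e = e) (hc : StrictMono c)
    (hb : ∀ i, segP f α (c i) (c (i + 1)) = (e : WithOne S)) :
    ∀ m m', m < m' → segP f α (c m) (c m') = (e : WithOne S) := by
  intro m m' h
  induction m', h using Nat.le_induction with
  | base => exact hb m
  | succ m' hm ih =>
    rw [segP_mul f α (hc (Nat.lt_of_succ_le hm)).le (hc (Nat.lt_succ_self m')).le, ih, hb,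
      ← WithOne.coe_mul, hee]

end cuts

/-! ### Infinite Ramsey theorem for pairs -/

/-- One refinement step for the Ramsey chain. -/
def StepPred {T' : Type*} (C : ℕ → ℕ → T') (T : Set ℕ) (p : ℕ × Set ℕ × T') : Prop :=
  p.1 ∈ T ∧ p.2.1 ⊆ T ∧ p.2.1.Infinite ∧ (∀ x ∈ p.2.1, p.1 < x) ∧ ∀ x ∈ p.2.1, C p.1 x = p.2.2

lemma step_ex {S : Type*} [Fintype S] (C : ℕ → ℕ → S) (T : Set ℕ) (hT : T.Infinite) :
    ∃ p, StepPred C T p := by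
  obtain ⟨n, hn⟩ := hT.nonempty
  have hT0 : (T \ Set.Iic n).Infinite := hT.diff (Set.finite_Iic n)
  have hsub : (T \ Set.Iic n) ⊆ ⋃ e : S, {x ∈ T \ Set.Iic n | C n x = e} := by
    intro x hx; exact Set.mem_iUnion.2 ⟨C n x, hx, rfl⟩
  have : ∃ e : S, {x ∈ T \ Set.Iic n | C n x = e}.Infinite := by
    by_contra hc
    push_neg at hc
    exact hT0 ((Set.finite_iUnion hc).subset hsub)
  obtain ⟨e, he⟩ := this
  refine ⟨(n, {x ∈ T \ Set.Iic n | C n x = e}, e), hn, ?_, he, ?_, ?_⟩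
  · intro x hx; exact hx.1.1
  · intro x hx; have := hx.1.2; simp only [Set.mem_Iic, not_le] at this; exact this
  · intro x hx; exact hx.2

noncomputable def step {S : Type*} [Fintype S] (C : ℕ → ℕ → S) (T : Set ℕ) (hT : T.Infinite) :
    ℕ × Set ℕ × S := (step_ex C T hT).choose

lemma step_spec {S : Type*} [Fintype S] (C : ℕ → ℕ → S) (T : Set ℕ) (hT : T.Infinite) :
    StepPred C T (step C T hT) := (step_ex C T hT).choose_spec

noncomputable def chain {S : Type*} [Fintype S] (C : ℕ → ℕ → S) : ℕ → {T : Set ℕ // T.Infinite}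
  | 0 => ⟨Set.Ioi 0, Set.Ioi_infinite 0⟩
  | k + 1 => ⟨(step C (chain C k).1 (chain C k).2).2.1,
      (step_spec C (chain C k).1 (chain C k).2).2.2.1⟩

noncomputable def nseq {S : Type*} [Fintype S] (C : ℕ → ℕ → S) (k : ℕ) : ℕ :=
  (step C (chain C k).1 (chain C k).2).1

noncomputable def colseq {S : Type*} [Fintype S] (C : ℕ → ℕ → S) (k : ℕ) : S :=
  (step C (chain C k).1 (chain C k).2).2.2

section ramsey
variable {S' : Type*} [Fintype S'] (C : ℕ → ℕ → S')

lemma nseq_mem (k : ℕ) : nseq C k ∈ (chain C k).1 := (step_spec C _ _).1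

lemma chain_succ_sub (k : ℕ) : (chain C (k+1)).1 ⊆ (chain C k).1 := (step_spec C _ _).2.1

lemma chain_gt (k : ℕ) : ∀ x ∈ (chain C (k+1)).1, nseq C k < x := (step_spec C _ _).2.2.2.1

lemma chain_col (k : ℕ) : ∀ x ∈ (chain C (k+1)).1, C (nseq C k) x = colseq C k :=
  (step_spec C _ _).2.2.2.2

lemma chain_sub {k l : ℕ} (h : k ≤ l) : (chain C l).1 ⊆ (chain C k).1 := by
  induction l, h using Nat.le_induction with
  | base => exact subset_rfl
  | succ l hl ih => exact (chain_succ_sub C l).trans ih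

lemma nseq_strictMono : StrictMono (nseq C) := by
  apply strictMono_nat_of_lt_succ
  intro k
  exact chain_gt C k _ (nseq_mem C (k+1))

lemma nseq_pos (k : ℕ) : 0 < nseq C k :=
  chain_sub C (Nat.zero_le k) (nseq_mem C k)

lemma nseq_col {k l : ℕ} (h : k < l) : C (nseq C k) (nseq C l) = colseq C k :=
  chain_col C k _ (chain_sub C h (nseq_mem C l))

/-- Infinite Ramsey theorem for pairs, in the form we need. -/
lemma ramsey_pairs : ∃ (e : S') (g : ℕ → ℕ), 0 < g 0 ∧ StrictMono g ∧
    ∀ j j', j < j' → C (g j) (g j') = e := by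
  obtain ⟨e, he⟩ := Finite.exists_infinite_fiber (colseq C)
  have hp : {k | colseq C k = e}.Infinite := by
    rw [← Set.infinite_coe_iff]
    exact he
  refine ⟨e, fun j => nseq C (Nat.nth (fun k => colseq C k = e) j), nseq_pos C _,
    (nseq_strictMono C).comp (Nat.nth_strictMono hp), fun j j' hj => ?_⟩
  rw [nseq_col C (Nat.nth_strictMono hp hj)]
  exact Nat.nth_mem_of_infinite hp j

end ramsey

/-! ### Every infinite word lies in some `[s][e]^ω` for a linked pair -/

lemma exists_linked [Fintype S] (f : A → S) (α : ℕ → A) :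
    ∃ s e : S, IsLinkedPair s e ∧ InSE f s e α := by
  classical
  set C : ℕ → ℕ → S := fun i j => (wordProd f (seg α i j)).getD (f (α 0)) with hCdef
  have hC : ∀ i j : ℕ, i < j → segP f α i j = ((C i j : S) : WithOne S) := by
    intro i j h
    obtain ⟨x, hx⟩ := segP_coe f α h
    have : wordProd f (seg α i j) = some x := (wordProd_seg_iff f α i j x).2 hx
    rw [hx, hCdef]
    simp [this]
  obtain ⟨e, g, hg0, hg, hmono⟩ := ramsey_pairs C
  have hblocks : ∀ j j', j < j' → segP f α (g j) (g j') = (e : WithOne S) := by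
    intro j j' h
    rw [hC _ _ (hg h), hmono j j' h]
  have hee : e * e = e := by
    have h02 : segP f α (g 0) (g 2) = segP f α (g 0) (g 1) * segP f α (g 1) (g 2) :=
      segP_mul f α (hg (by norm_num)).le (hg (by norm_num)).le
    rw [hblocks 0 1 (by norm_num), hblocks 1 2 (by norm_num), hblocks 0 2 (by norm_num),
      ← WithOne.coe_mul] at h02
    exact (WithOne.coe_inj.1 h02).symm
  refine ⟨C 0 (g 0) * e, e, ⟨hee, by rw [mul_assoc, hee]⟩, fun i => g (i + 1), ?_, ?_, ?_, ?_⟩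
  · exact hg0.trans (hg (by norm_num))
  · exact fun i j h => hg (Nat.succ_lt_succ h)
  · rw [wordProd_seg_iff]
    rw [segP_mul f α (Nat.zero_le (g 0)) (hg (by norm_num)).le, hC 0 (g 0) hg0,
      hblocks 0 1 (by norm_num), ← WithOne.coe_mul]
  · intro i
    rw [wordProd_seg_iff]
    exact hblocks (i + 1) (i + 2) (by omega)

/-! ### Two factorizations of the same word give conjugate linked pairs -/

lemma conj_of_inter [Fintype S] (f : A → S) {s e t u : S}
    (hse : IsLinkedPair s e) (htu : IsLinkedPair t u) {α : ℕ → A}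
    (h1 : InSE f s e α) (h2 : InSE f t u α) : ConjPairs (t, u) (s, e) := by
  obtain ⟨c, hc0, hc, hcp, hcb⟩ := h1
  obtain ⟨d, hd0, hd, hdp, hdb⟩ := h2
  rw [wordProd_seg_iff] at hcp hdp
  simp only [wordProd_seg_iff] at hcb hdb
  have hcpre : ∀ m, segP f α 0 (c m) = (s : WithOne S) := prefix_const f α hse.2 hc hcp hcb
  have hdpre : ∀ m, segP f α 0 (d m) = (t : WithOne S) := prefix_const f α htu.2 hd hdp hdb
  have hcblk := block_const f α hse.1 hc hcb
  have hdblk := block_const f α htu.1 hd hdb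
  -- interleaved cut points: `d (N k) < c (d (N k) + 1) < d (N (k+1))`
  let N : ℕ → ℕ := fun k => Nat.rec 0 (fun _ nk => c (d nk + 1) + 1) k
  have hNs : ∀ k, N (k + 1) = c (d (N k) + 1) + 1 := fun k => rfl
  have f1 : ∀ k, d (N k) < c (d (N k) + 1) :=
    fun k => lt_of_lt_of_le (Nat.lt_succ_self _) hc.le_apply
  have f2 : ∀ k, c (d (N k) + 1) < d (N (k + 1)) := by
    intro k
    rw [hNs]
    exact lt_of_lt_of_le (Nat.lt_succ_self _) hd.le_apply
  have hNmono : StrictMono N := by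
    apply strictMono_nat_of_lt_succ
    intro k
    exact hd.lt_iff_lt.1 ((f1 k).trans (f2 k))
  -- the crossing products `x k = segP α (d (N k)) (c (d (N k) + 1))`
  choose x hx using fun k => segP_coe f α (f1 k)
  obtain ⟨k, l, hkl, hxkl⟩ : ∃ k l, k < l ∧ x k = x l := by
    obtain ⟨a, b, hab, h⟩ := Finite.exists_ne_map_eq_of_infinite x
    rcases hab.lt_or_gt with h' | h'
    · exact ⟨a, b, h', h⟩
    · exact ⟨b, a, h', h.symm⟩
  have hckdl : c (d (N k) + 1) < d (N l) :=
    (f2 k).trans_le (hd.monotone (hNmono.monotone hkl))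
  obtain ⟨y, hy⟩ := segP_coe f α hckdl
  refine ⟨x k, y, ?_, ?_, ?_⟩
  · -- t * x k = s
    have h3 : segP f α 0 (c (d (N k) + 1)) =
        segP f α 0 (d (N k)) * segP f α (d (N k)) (c (d (N k) + 1)) :=
      segP_mul f α (Nat.zero_le _) (f1 k).le
    rw [hcpre, hdpre, hx, ← WithOne.coe_mul] at h3
    exact (WithOne.coe_inj.1 h3).symm
  · -- x k * y = u
    have h3 : segP f α (d (N k)) (d (N l)) =
        segP f α (d (N k)) (c (d (N k) + 1)) * segP f α (c (d (N k) + 1)) (d (N l)) :=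
      segP_mul f α (f1 k).le hckdl.le
    rw [hdblk _ _ (hNmono hkl), hx, hy, ← WithOne.coe_mul] at h3
    exact (WithOne.coe_inj.1 h3).symm
  · -- y * x k = e
    have h3 : segP f α (c (d (N k) + 1)) (c (d (N l) + 1)) =
        segP f α (c (d (N k) + 1)) (d (N l)) * segP f α (d (N l)) (c (d (N l) + 1)) :=
      segP_mul f α hckdl.le (f1 l).le
    rw [hcblk _ _ (by have := hd (hNmono hkl); omega), hy, hx l, ← WithOne.coe_mul] at h3
    rw [hxkl]
    exact (WithOne.coe_inj.1 h3).symm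

/-- Conjugacy is symmetric on pairs whose first member is linked. -/
lemma conj_symm {p q : S × S} (hp : IsLinkedPair p.1 p.2) (h : ConjPairs p q) :
    ConjPairs q p := by
  obtain ⟨x, y, h1, h2, h3⟩ := h
  refine ⟨y, x, ?_, h3, h2⟩
  rw [← h1, mul_assoc, h2, hp.2]

end CSRaux

/-- If `h` strongly recognizes `L` via `P` closed under conjugation, then the set
`P'` of linked pairs not in `P` is closed under conjugation and `[P'] = A^ω \ L`. -/
theorem complement_strongly_recognized {A S : Type*} [Semigroup S] [Fintype S]
    (f : A → S) (hsurj : ∀ s : S, ∃ l : List A, wordProd f l = some s)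
    (P : Set (S × S)) (hP : ∀ p ∈ P, IsLinkedPair p.1 p.2)
    (hclosed : ∀ p q : S × S, p ∈ P → IsLinkedPair q.1 q.2 → ConjPairs p q → q ∈ P)
    (L : Set (ℕ → A)) (hL : L = LangOf f P) :
    (∀ p q : S × S, p ∈ {r : S × S | IsLinkedPair r.1 r.2 ∧ r ∉ P} →
        IsLinkedPair q.1 q.2 → ConjPairs p q →
        q ∈ {r : S × S | IsLinkedPair r.1 r.2 ∧ r ∉ P}) ∧
      Lᶜ = LangOf f {r : S × S | IsLinkedPair r.1 r.2 ∧ r ∉ P} := by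
  have hclosed' : ∀ p q : S × S, p ∈ {r : S × S | IsLinkedPair r.1 r.2 ∧ r ∉ P} →
      IsLinkedPair q.1 q.2 → ConjPairs p q →
      q ∈ {r : S × S | IsLinkedPair r.1 r.2 ∧ r ∉ P} := by
    rintro p q ⟨hpl, hpP⟩ hql hconj
    exact ⟨hql, fun hqP => hpP (hclosed q p hqP hpl (CSRaux.conj_symm hpl hconj))⟩
  refine ⟨hclosed', ?_⟩
  ext α
  simp only [Set.mem_compl_iff, hL, LangOf, Set.mem_setOf_eq]
  constructor
  · intro hnL
    obtain ⟨s, e, hlink, hin⟩ := CSRaux.exists_linked f α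
    exact ⟨(s, e), ⟨hlink, fun hmem => hnL ⟨(s, e), hmem, hin⟩⟩, hin⟩
  · rintro ⟨⟨t, u⟩, ⟨htl, htP⟩, hin⟩ ⟨⟨s, e⟩, hseP, hin'⟩
    have hsel := hP _ hseP
    have hconj := CSRaux.conj_of_inter f hsel htl hin' hin
    exact (hclosed' (t, u) (s, e) ⟨htl, htP⟩ hsel hconj).2 hseP
end

section
/- Let π : A⁺ → B⁺ be a length-preserving morphism and h : A⁺ → S a surjective morphism onto a finite semigroup strongly recognizing L ⊆ A^ω. Define T as the power set 2^S with setwise multiplication X·Y = {xy : x∈X, y∈Y}, and g : B⁺ → T by g(b) = h(π⁻¹(b) ∩ A) for b ∈ B. Then g strongly recognizes π(L) ⊆ B^ω. -/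
open Pointwise

section Helpers

variable {A B S : Type*} [Semigroup S]

lemma ps_foldl_mul (f : A → S) (l : List A) (x y : S) :
    l.foldl (fun s b => s * f b) (x * y) = x * l.foldl (fun s b => s * f b) y := by
  induction l generalizing y with
  | nil => rfl
  | cons a l ih => simp only [List.foldl_cons, mul_assoc]; exact ih (y * f a)

lemma ps_wordProd_exists (f : A → S) {l : List A} (h : l ≠ []) :
    ∃ s, wordProd f l = some s := by
  cases l with
  | nil => exact absurd rfl h
  | cons a l => exact ⟨_, rfl⟩

lemma ps_wordProd_append (f : A → S) {l₁ l₂ : List A} {s t : S}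
    (h1 : wordProd f l₁ = some s) (h2 : wordProd f l₂ = some t) :
    wordProd f (l₁ ++ l₂) = some (s * t) := by
  cases l₁ with
  | nil => simp [wordProd] at h1
  | cons a l =>
    cases l₂ with
    | nil => simp [wordProd] at h2
    | cons b m =>
      simp only [wordProd, Option.some.injEq] at h1 h2
      show some ((l ++ b :: m).foldl (fun s b => s * f b) (f a)) = some (s * t)
      rw [List.foldl_append, h1, List.foldl_cons, ps_foldl_mul f m s (f b), h2]

lemma ps_seg_length (α : ℕ → A) (i j : ℕ) : (seg α i j).length = j - i := by
  simp [seg]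

lemma ps_seg_ne_nil (α : ℕ → A) {i j : ℕ} (h : i < j) : seg α i j ≠ [] := by
  intro hn
  have := ps_seg_length α i j
  rw [hn] at this
  simp at this
  omega

lemma ps_seg_map (π : A → B) (α : ℕ → A) (i j : ℕ) :
    (seg α i j).map π = seg (π ∘ α) i j := by
  simp [seg, Function.comp]

lemma ps_seg_getElem (α : ℕ → A) (i j m : ℕ) (h : m < (seg α i j).length) :
    (seg α i j)[m] = α (i + m) := by
  simp [seg]

lemma ps_seg_append (α : ℕ → A) {i j k : ℕ} (hij : i ≤ j) (hjk : j ≤ k) :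
    seg α i k = seg α i j ++ seg α j k := by
  unfold seg
  rw [show k - i = (j - i) + (k - j) by omega, List.range_add, List.map_append, List.map_map]
  congr 1
  apply List.map_congr_left
  intro m _
  simp only [Function.comp_apply]
  congr 1
  omega

/-- Forward lifting lemma: the `f`-product of any word lies in the `g`-product of
its image. -/
lemma ps_mem_of_lift (π : A → B) (f : A → S) :
    ∀ (l : List A) (s : S) (W : Set S), wordProd f l = some s →
      wordProd (fun b => f '' {a | π a = b}) (l.map π) = some W → s ∈ W := by
  intro l
  induction l using List.reverseRecOn with
  | nil => intro s W h _; simp [wordProd] at h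
  | append_singleton l a ih =>
    intro s W h1 h2
    cases l with
    | nil =>
      simp only [List.nil_append, List.map_cons, List.map_nil] at h1 h2
      rw [show wordProd f [a] = some (f a) from rfl] at h1
      rw [show wordProd (fun b => f '' {a | π a = b}) [π a] =
        some (f '' {a' | π a' = π a}) from rfl] at h2
      have h1' : f a = s := Option.some_injective _ h1
      have h2' : (f '' {a' | π a' = π a}) = W := Option.some_injective _ h2
      subst h1' h2'
      exact ⟨a, rfl, rfl⟩
    | cons b m =>
      obtain ⟨s', hs'⟩ := ps_wordProd_exists f (l := b :: m) (by simp)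
      obtain ⟨W', hW'⟩ := ps_wordProd_exists (fun b => f '' {a | π a = b})
        (l := (b :: m).map π) (by simp)
      have e1 := ps_wordProd_append f hs' (show wordProd f [a] = some (f a) from rfl)
      have e2 := ps_wordProd_append (fun b => f '' {a | π a = b}) hW'
        (show wordProd (fun b => f '' {a | π a = b}) [π a] =
          some (f '' {a' | π a' = π a}) from rfl)
      rw [h1] at e1
      rw [show ((b :: m) ++ [a]).map π = (b :: m).map π ++ [π a] by simp] at h2
      rw [h2] at e2
      obtain rfl : s = s' * f a := Option.some_injective _ e1
      obtain rfl : W = W' * (f '' {a' | π a' = π a}) := Option.some_injective _ e2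
      exact Set.mul_mem_mul (ih s' W' hs' hW') ⟨a, rfl, rfl⟩

/-- Backward lifting lemma: every element of the `g`-product of a word over `B`
is the `f`-product of some lift. -/
lemma ps_exists_lift (π : A → B) (f : A → S) :
    ∀ (w : List B) (W : Set S) (s : S),
      wordProd (fun b => f '' {a | π a = b}) w = some W → s ∈ W →
      ∃ l : List A, l.map π = w ∧ wordProd f l = some s := by
  intro w
  induction w using List.reverseRecOn with
  | nil => intro W s h _; simp [wordProd] at h
  | append_singleton w b ih =>
    intro W s h1 hs
    cases w with
    | nil =>
      rw [List.nil_append, show wordProd (fun b => f '' {a | π a = b}) [b] =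
        some (f '' {a | π a = b}) from rfl] at h1
      obtain rfl := Option.some_injective _ h1
      obtain ⟨a, ha, rfl⟩ := hs
      exact ⟨[a], by simp only [List.map_cons, List.map_nil, show π a = b from ha, List.nil_append], rfl⟩
    | cons b' m =>
      obtain ⟨W', hW'⟩ := ps_wordProd_exists (fun b => f '' {a | π a = b})
        (l := b' :: m) (by simp)
      have e2 := ps_wordProd_append (fun b => f '' {a | π a = b}) hW'
        (show wordProd (fun b => f '' {a | π a = b}) [b] =
          some (f '' {a | π a = b}) from rfl)
      rw [h1] at e2
      obtain rfl := Option.some_injective _ e2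
      rw [Set.mem_mul] at hs
      obtain ⟨x, hx, y, ⟨a, ha, rfl⟩, hxy⟩ := hs
      obtain ⟨l', hl'map, hl'prod⟩ := ih W' x hW' hx
      refine ⟨l' ++ [a], by rw [List.map_append, hl'map, show (List.map π [a]) = [b] by simp only [List.map_cons, List.map_nil, show π a = b from ha]], ?_⟩
      rw [ps_wordProd_append f hl'prod (show wordProd f [a] = some (f a) from rfl), hxy]

end Helpers

section Part2

variable {A B S : Type*} [Semigroup S]

/-- Products of consecutive blocks. -/
lemma ps_wordProd_blocks {T : Type*} [Semigroup T] (g : B → T) (β : ℕ → B) (c : ℕ → ℕ)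
    (hmono : StrictMono c) (Y : T) (hY : ∀ i, wordProd g (seg β (c i) (c (i + 1))) = some Y)
    (Yp : ℕ → T) (hYp0 : Yp 0 = Y) (hYps : ∀ m, Yp (m + 1) = Yp m * Y) :
    ∀ m i, wordProd g (seg β (c i) (c (i + m + 1))) = some (Yp m) := by
  intro m
  induction m with
  | zero => intro i; rw [hYp0]; exact hY i
  | succ m ih =>
    intro i
    have h1 : c i ≤ c (i + m + 1) := le_of_lt (hmono (by omega))
    have h2 : c (i + m + 1) ≤ c (i + m + 2) := le_of_lt (hmono (by omega))
    rw [show i + (m + 1) + 1 = (i + m + 1) + 1 by omega,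
      ps_seg_append β h1 h2, ps_wordProd_append g (ih i) (hY (i + m + 1)), hYps]

lemma ps_wordProd_prefix {T : Type*} [Semigroup T] (g : B → T) (β : ℕ → B) (c : ℕ → ℕ)
    (hmono : StrictMono c) (X Y : T)
    (hX : wordProd g (seg β 0 (c 0)) = some X)
    (hY : ∀ i, wordProd g (seg β (c i) (c (i + 1))) = some Y)
    (Xp : ℕ → T) (hXp0 : Xp 0 = X) (hXps : ∀ m, Xp (m + 1) = Xp m * Y) :
    ∀ m, wordProd g (seg β 0 (c m)) = some (Xp m) := by
  intro m
  induction m with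
  | zero => rw [hXp0]; exact hX
  | succ m ih =>
    rw [ps_seg_append β (Nat.zero_le _) (le_of_lt (hmono (Nat.lt_succ_self m))),
      ps_wordProd_append g ih (hY m), hXps]

open Filter in
/-- Every coloring of pairs admits an increasing sequence with constant colors on
consecutive pairs. -/
lemma ps_exists_consec_const {C : Type*} [Finite C] [Nonempty C] (r : ℕ → ℕ → C) :
    ∃ (e : C) (φ : ℕ → ℕ), StrictMono φ ∧ ∀ n, r (φ n) (φ (n + 1)) = e := by
  set U : Ultrafilter ℕ := Filter.hyperfilter ℕ with hU
  have hpart : ∀ h : ℕ → C, ∃ e, {j | h j = e} ∈ U := by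
    intro h
    have huniv : (⋃ e ∈ (Set.univ : Set C), {j | h j = e}) ∈ U := by
      have : (⋃ e ∈ (Set.univ : Set C), {j | h j = e}) = Set.univ := by
        ext j; simp
      rw [this]; exact Filter.univ_mem
    rcases (Ultrafilter.finite_biUnion_mem_iff Set.finite_univ).1 huniv with ⟨e, _, he⟩
    exact ⟨e, he⟩
  choose col hcol using fun i => hpart (r i)
  obtain ⟨e, hA⟩ := hpart col
  set A : Set ℕ := {i | col i = e} with hAdef
  have hC : ∀ i, (A ∩ Set.Ioi i ∩ {j | i ∈ A → r i j = e}) ∈ U := by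
    intro i
    refine Filter.inter_mem (Filter.inter_mem hA ?_) ?_
    · exact Filter.mem_hyperfilter_of_finite_compl (by simpa using Set.finite_Iic i)
    · by_cases hi : i ∈ A
      · refine Filter.mem_of_superset (hcol i) ?_
        intro j hj _
        rw [hj]; exact hi
      · exact Filter.mem_of_superset Filter.univ_mem (fun j _ h => absurd h hi)
  have hCne : ∀ i, (A ∩ Set.Ioi i ∩ {j | i ∈ A → r i j = e}).Nonempty :=
    fun i => Ultrafilter.nonempty_of_mem (hC i)
  obtain ⟨a₀, ha₀⟩ := Ultrafilter.nonempty_of_mem hA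
  set next : ℕ → ℕ := fun i => (hCne i).choose with hnextdef
  have hnext : ∀ i, next i ∈ A ∧ i < next i ∧ (i ∈ A → r i (next i) = e) := by
    intro i
    have h := (hCne i).choose_spec
    exact ⟨h.1.1, h.1.2, h.2⟩
  set φ : ℕ → ℕ := fun n => next^[n] a₀ with hφdef
  have hφA : ∀ n, φ n ∈ A := by
    intro n
    induction n with
    | zero => exact ha₀
    | succ n ih =>
      rw [hφdef]
      simp only [Function.iterate_succ_apply']
      exact (hnext _).1
  have hφsucc : ∀ n, φ (n + 1) = next (φ n) := by
    intro n; rw [hφdef]; simp [Function.iterate_succ_apply']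
  refine ⟨e, φ, strictMono_nat_of_lt_succ fun n => ?_, fun n => ?_⟩
  · rw [hφsucc n]; exact (hnext (φ n)).2.1
  · rw [hφsucc n]; exact (hnext (φ n)).2.2 (hφA n)

/-- Gluing a sequence of finite pieces into an infinite word. -/
lemma ps_glue {A : Type*} (start : ℕ → ℕ) (h0 : start 0 = 0) (hmono : StrictMono start)
    (pieces : ℕ → List A) (hlen : ∀ n, (pieces n).length = start (n + 1) - start n) :
    ∃ α : ℕ → A, (∀ j, seg α (start j) (start (j + 1)) = pieces j) ∧
      ∀ n, ∃ j m, ∃ h : m < (pieces j).length, n = start j + m ∧ α n = (pieces j)[m] := by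
  have hp0 : pieces 0 ≠ [] := by
    have := hlen 0
    rw [h0] at this
    intro hnil
    rw [hnil] at this
    have h1 : 0 < start 1 := by rw [← h0]; exact hmono Nat.zero_lt_one
    simp at this
    omega
  haveI : Inhabited A := Classical.inhabited_of_nonempty
    ⟨(pieces 0).head hp0⟩
  have hex : ∀ n : ℕ, ∃ j, n < start (j + 1) := by
    intro n
    exact ⟨n, lt_of_lt_of_le (Nat.lt_succ_self n) hmono.le_apply⟩
  set J : ℕ → ℕ := fun n => Nat.find (hex n) with hJdef
  set α : ℕ → A := fun n => (pieces (J n)).getD (n - start (J n)) default with hαdef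
  have hJeq : ∀ j n, start j ≤ n → n < start (j + 1) → J n = j := by
    intro j n h1 h2
    have hle : J n ≤ j := Nat.find_min' (hex n) h2
    rcases lt_or_eq_of_le hle with hlt | heq
    · exfalso
      have hspec : n < start (J n + 1) := Nat.find_spec (hex n)
      have : start (J n + 1) ≤ start j := hmono.monotone (by omega)
      omega
    · exact heq
  have key : ∀ j m (h : m < (pieces j).length), α (start j + m) = (pieces j)[m] := by
    intro j m h
    have hm : m < start (j + 1) - start j := hlen j ▸ h
    have h1 : start j ≤ start j + m := Nat.le_add_right _ _
    have h2 : start j + m < start (j + 1) := by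
      have := hmono (Nat.lt_succ_self j)
      omega
    rw [hαdef]
    simp only
    rw [hJeq j _ h1 h2, Nat.add_sub_cancel_left, List.getD_eq_getElem _ _ h]
  refine ⟨α, fun j => ?_, fun n => ?_⟩
  · apply List.ext_getElem
    · rw [ps_seg_length, hlen]
    · intro m h1 h2
      rw [ps_seg_getElem, key j m h2]
  · have hspec : n < start (J n + 1) := Nat.find_spec (hex n)
    have hlow : start (J n) ≤ n := by
      rcases Nat.eq_zero_or_pos (J n) with h | h
      · rw [h, h0]; exact Nat.zero_le n
      · have hfind := Nat.find_min (hex n) (m := J n - 1) (show J n - 1 < J n by omega)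
        push_neg at hfind
        have heq : J n - 1 + 1 = J n := by omega
        rw [heq] at hfind
        exact hfind
    refine ⟨J n, n - start (J n), ?_, by omega, ?_⟩
    · rw [hlen]; omega
    · have hn : start (J n) + (n - start (J n)) = n := by omega
      have hk := key (J n) (n - start (J n)) (by rw [hlen]; omega)
      have hα : α n = α (start (J n) + (n - start (J n))) := by rw [hn]
      rw [hα]
      exact hk
end Part2



/-- Iterated setwise products `X * Y^m`. -/
def psPow {T : Type*} [Semigroup T] (X Y : T) : ℕ → T
  | 0 => X
  | m + 1 => psPow X Y m * Y

/-- Powerset construction for a length-preserving morphism `π : A⁺ → B⁺` (given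
letterwise by `π : A → B`): if the surjective morphism `h : A⁺ → S` strongly
recognizes `L` (saturation form), then `g : B⁺ → 2^S`, `g(b) = h(π⁻¹(b))`, strongly
recognizes `π(L)`, where `2^S` carries the setwise multiplication. -/
theorem powerset_strongly_recognizes_image {A B S : Type*} [Semigroup S] [Fintype S]
    (π : A → B) (f : A → S)
    (hsurj : ∀ s : S, ∃ l : List A, wordProd f l = some s)
    (L : Set (ℕ → A))
    (hstrong : ∀ s t : S, (∃ α, InSE f s t α ∧ α ∈ L) → ∀ α, InSE f s t α → α ∈ L) :
    ∀ X Y : Set S,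
      (∃ β, InSE (fun b => f '' {a | π a = b}) X Y β ∧ β ∈ (fun α : ℕ → A => π ∘ α) '' L) →
      ∀ β, InSE (fun b => f '' {a | π a = b}) X Y β → β ∈ (fun α : ℕ → A => π ∘ α) '' L := by
  intro X Y hex0 β hβSE
  obtain ⟨β₀, hβ₀SE, α₀, hα₀L, hπα₀⟩ := hex0
  have hπα₀' : π ∘ α₀ = β₀ := hπα₀
  obtain ⟨c, hc0, hcmono, hcX, hcY⟩ := hβSE
  obtain ⟨c₀, hc₀0, hc₀mono, hc₀X, hc₀Y⟩ := hβ₀SE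
  set g : B → Set S := fun b => f '' {a | π a = b} with hg
  -- constant consecutive block products for α₀
  obtain ⟨e', φ, hφmono, hφe⟩ := ps_exists_consec_const
    (fun i j => wordProd f (seg α₀ (c₀ i) (c₀ j)))
  obtain ⟨e, he⟩ := ps_wordProd_exists f (ps_seg_ne_nil α₀ (hc₀mono (hφmono Nat.zero_lt_one)))
  have he' : e' = some e := (hφe 0).symm.trans he
  have hblocks : ∀ n, wordProd f (seg α₀ (c₀ (φ n)) (c₀ (φ (n + 1)))) = some e :=
    fun n => (hφe n).trans he'
  have hφ00 : 0 < c₀ (φ 0) := lt_of_lt_of_le hc₀0 (hc₀mono.monotone (Nat.zero_le _))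
  obtain ⟨s', hs'⟩ := ps_wordProd_exists f (ps_seg_ne_nil α₀ hφ00)
  have hα₀SE : InSE f s' e α₀ :=
    ⟨fun n => c₀ (φ n), hφ00, hc₀mono.comp hφmono, hs', hblocks⟩
  have hL : ∀ α, InSE f s' e α → α ∈ L := hstrong s' e ⟨α₀, hα₀SE, hα₀L⟩
  -- segment products on the B side
  have hβ₀pre : ∀ m, wordProd g (seg β₀ 0 (c₀ m)) = some (psPow X Y m) :=
    ps_wordProd_prefix g β₀ c₀ hc₀mono X Y hc₀X hc₀Y (psPow X Y) rfl (fun _ => rfl)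
  have hβ₀blk : ∀ m i, wordProd g (seg β₀ (c₀ i) (c₀ (i + m + 1))) = some (psPow Y Y m) :=
    ps_wordProd_blocks g β₀ c₀ hc₀mono Y hc₀Y (psPow Y Y) rfl (fun _ => rfl)
  have hβpre : ∀ m, wordProd g (seg β 0 (c m)) = some (psPow X Y m) :=
    ps_wordProd_prefix g β c hcmono X Y hcX hcY (psPow X Y) rfl (fun _ => rfl)
  have hβblk : ∀ m i, wordProd g (seg β (c i) (c (i + m + 1))) = some (psPow Y Y m) :=
    ps_wordProd_blocks g β c hcmono Y hcY (psPow Y Y) rfl (fun _ => rfl)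
  -- memberships of s' and e
  have hs'mem : s' ∈ psPow X Y (φ 0) := by
    apply ps_mem_of_lift π f _ s' _ hs'
    rw [ps_seg_map, hπα₀']
    exact hβ₀pre (φ 0)
  have hemem : ∀ n, e ∈ psPow Y Y (φ (n + 1) - φ n - 1) := by
    intro n
    have hlt : φ n < φ (n + 1) := hφmono (Nat.lt_succ_self n)
    have hidx : φ n + (φ (n + 1) - φ n - 1) + 1 = φ (n + 1) := by omega
    apply ps_mem_of_lift π f _ e _ (hblocks n)
    rw [ps_seg_map, hπα₀']
    have hb := hβ₀blk (φ (n + 1) - φ n - 1) (φ n)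
    rw [hidx] at hb
    exact hb
  -- lifts of the segments of β
  set start : ℕ → ℕ := fun n => match n with | 0 => 0 | Nat.succ k => c (φ k) with hstartdef
  set v : ℕ → S := fun n => match n with | 0 => s' | Nat.succ _ => e with hvdef
  have hlift : ∀ n, ∃ l : List A,
      l.map π = seg β (start n) (start (n + 1)) ∧ wordProd f l = some (v n) := by
    intro n
    cases n with
    | zero => exact ps_exists_lift π f (seg β 0 (c (φ 0))) _ s' (hβpre (φ 0)) hs'mem
    | succ n =>
      have hlt : φ n < φ (n + 1) := hφmono (Nat.lt_succ_self n)
      have hidx : φ n + (φ (n + 1) - φ n - 1) + 1 = φ (n + 1) := by omega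
      have hb := hβblk (φ (n + 1) - φ n - 1) (φ n)
      rw [hidx] at hb
      exact ps_exists_lift π f (seg β (c (φ n)) (c (φ (n + 1)))) _ e hb (hemem n)
  choose pieces hπp hfp using hlift
  have hc0φ : 0 < c (φ 0) := lt_of_lt_of_le hc0 (hcmono.monotone (Nat.zero_le _))
  have hstartmono : StrictMono start := by
    apply strictMono_nat_of_lt_succ
    intro n
    cases n with
    | zero => exact hc0φ
    | succ n => exact hcmono (hφmono (Nat.lt_succ_self n))
  have hlen : ∀ n, (pieces n).length = start (n + 1) - start n := by
    intro n
    have := congrArg List.length (hπp n)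
    rw [List.length_map, ps_seg_length] at this
    exact this
  obtain ⟨α, hαseg, hαpt⟩ := ps_glue start rfl hstartmono pieces hlen
  have hαSE : InSE f s' e α := by
    refine ⟨fun n => c (φ n), hc0φ, hcmono.comp hφmono, ?_, ?_⟩
    · have h1 : seg α 0 (c (φ 0)) = pieces 0 := hαseg 0
      rw [h1]
      exact hfp 0
    · intro i
      have h1 : seg α (c (φ i)) (c (φ (i + 1))) = pieces (i + 1) := hαseg (i + 1)
      rw [h1]
      exact hfp (i + 1)
  refine ⟨α, hL α hαSE, ?_⟩
  funext n
  obtain ⟨j, m, h, hn, hα⟩ := hαpt n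
  have h1 : m < ((pieces j).map π).length := by simpa using h
  show π (α n) = β n
  rw [hα, show π ((pieces j)[m]) = ((pieces j).map π)[m] from (List.getElem_map π).symm,
    List.getElem_of_eq (hπp j) h1, ps_seg_getElem, ← hn]
end

section
/- For n ≥ 4, let N = {0,…,n−1} and T = (N × 2^N × N) ∪ N with the operation: (i,X,j)+(k,Y,ℓ) = (i, X ∪ {j+k} ∪ Y, ℓ); (i,X,j)+k = (i,X,j+k); i+(j,X,k) = (i+j,X,k); and i+j on N is addition modulo n. Then this operation is associative, so T is a semigroup. -/
/-- The carrier `(N × 2^N × N) ∪ N` where `N = ℤ/nℤ = {0, …, n-1}`. -/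
abbrev TSg (n : ℕ) := (ZMod n × Set (ZMod n) × ZMod n) ⊕ ZMod n

/-- The operation on `T`: `(i,X,j)+(k,Y,ℓ) = (i, X ∪ {j+k} ∪ Y, ℓ)`;
`(i,X,j)+k = (i,X,j+k)`; `i+(j,X,k) = (i+j,X,k)`; `i+j` is addition mod `n`. -/
def TOp (n : ℕ) : TSg n → TSg n → TSg n
  | .inl (i, X, j), .inl (k, Y, l) => .inl (i, X ∪ {j + k} ∪ Y, l)
  | .inl (i, X, j), .inr k => .inl (i, X, j + k)
  | .inr i, .inl (j, X, k) => .inl (i + j, X, k)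
  | .inr i, .inr j => .inr (i + j)

/-- For `n ≥ 4`, the operation on `T = (N × 2^N × N) ∪ N` is associative,
so `T` is a semigroup. -/
theorem TOp_assoc (n : ℕ) (hn : 4 ≤ n) (x y z : TSg n) :
    TOp n (TOp n x y) z = TOp n x (TOp n y z) := by
  rcases x with ⟨i, X, j⟩ | i <;> rcases y with ⟨k, Y, l⟩ | k <;>
    rcases z with ⟨m, Z, p⟩ | m <;> simp only [TOp, add_assoc]
  simp only [Sum.inl.injEq, Prod.mk.injEq, true_and, and_true]
  ext t
  simp only [Set.mem_union, Set.mem_singleton_iff]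
  tauto
end

section
/- In the semigroup T = (N × 2^N × N) ∪ N (with N = {0,…,n−1}, operation as defined, n ≥ 4), every element of the form (0, X, 0) with 0 ∈ X is idempotent, and for any two such elements e = (0,E,0) and f = (0,F,0) with 0 ∈ E, 0 ∈ F: if there exist x, y ∈ T with x+y = e and y+x = f, then e = f. -/
/-- In `T`, every element `(0, X, 0)` with `0 ∈ X` is idempotent, and for any two
such elements `e = (0,E,0)`, `f = (0,F,0)`: if there are `x, y ∈ T` with `x+y = e`
and `y+x = f`, then `e = f`. -/
theorem TSg_idempotents (n : ℕ) (hn : 4 ≤ n) :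
    (∀ X : Set (ZMod n), (0 : ZMod n) ∈ X →
      TOp n (.inl (0, X, 0)) (.inl (0, X, 0)) = .inl (0, X, 0)) ∧
    (∀ E F : Set (ZMod n), (0 : ZMod n) ∈ E → (0 : ZMod n) ∈ F →
      (∃ x y : TSg n, TOp n x y = .inl (0, E, 0) ∧ TOp n y x = .inl (0, F, 0)) →
      E = F) := by
  constructor
  · intro X hX
    simp only [TOp, add_zero]
    congr 1
    simp [Set.union_comm, Set.insert_eq, Set.insert_eq_self.mpr hX]
  · rintro E F hE hF ⟨x, y, hxy, hyx⟩
    rcases x with ⟨i, X, j⟩ | i <;> rcases y with ⟨k, Y, l⟩ | k <;>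
      simp only [TOp, Sum.inl.injEq, Prod.mk.injEq] at hxy hyx
    · obtain ⟨hi, hEu, hl⟩ := hxy
      obtain ⟨hk, hFu, hj⟩ := hyx
      subst hi hl hk hj
      rw [← hEu, ← hFu]
      simp [Set.union_comm, Set.union_assoc, Set.union_left_comm]
    · obtain ⟨hi, hEu, hjk⟩ := hxy
      obtain ⟨hki, hFu, hj⟩ := hyx
      subst hi hj
      rw [add_zero] at hki
      subst hki
      rw [← hEu, ← hFu]
    · obtain ⟨hik, hEu, hl⟩ := hxy
      obtain ⟨hk, hFu, hli⟩ := hyx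
      subst hk hl
      rw [add_zero] at hik
      subst hik
      rw [← hEu, ← hFu]
    · exact absurd hxy (by simp)
end

section
/- Let h : A⁺ → S be a surjective morphism onto a finite semigroup strongly recognizing L ⊆ A^ω via P closed under conjugation, and let Q = {(s,t) : [s][t]^ω ⊆ [P]}. Define s ≅ t iff for all z ∈ S, ((z,s) ∈ Q ↔ (z,t) ∈ Q) and ((s,z) ∈ Q ↔ (t,z) ∈ Q), and let ≡ be the coarsest congruence refining ≅, i.e., s ≡ t iff xsy ≅ xty for all x,y ∈ S¹. Then the quotient semigroup S/≡ is isomorphic to the syntactic semigroup A⁺/≡_L of L. -/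
/-- The syntactic congruence of `L ⊆ A^ω` on finite words. -/
def SynCong {A : Type*} [Inhabited A] (L : Set (ℕ → A)) (u v : List A) : Prop :=
  ∀ x y z : List A,
    (z ≠ [] → (upow (x ++ u ++ y) z ∈ L ↔ upow (x ++ v ++ y) z ∈ L)) ∧
    (upow z (x ++ u ++ y) ∈ L ↔ upow z (x ++ v ++ y) ∈ L)

/-- Nonempty finite words over `A`, i.e. `A⁺`. -/
def Word (A : Type*) := {l : List A // l ≠ []}

/-- The relation `≅` on `S` induced by `Q ⊆ S × S`: `s ≅ t` iff membership of pairs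
in `Q` is unchanged when replacing `s` by `t` in either coordinate. -/
def EqQ {S : Type*} (Q : Set (S × S)) (s t : S) : Prop :=
  ∀ z : S, ((z, s) ∈ Q ↔ (z, t) ∈ Q) ∧ ((s, z) ∈ Q ↔ (t, z) ∈ Q)

/-- The coarsest congruence `≡` refining `≅`: `s ≡ t` iff `xsy ≅ xty` for all
`x, y ∈ S¹` (the four cases of `x, y` being `1` or in `S` are spelled out). -/
def CongQ {S : Type*} [Semigroup S] (Q : Set (S × S)) (s t : S) : Prop :=
  EqQ Q s t ∧ (∀ x : S, EqQ Q (x * s) (x * t)) ∧ (∀ y : S, EqQ Q (s * y) (t * y)) ∧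
    ∀ x y : S, EqQ Q (x * s * y) (x * t * y)

namespace WilkeAux
set_option linter.unusedSectionVars false

variable {A S : Type*} [Inhabited A] [Semigroup S]

/-- Total product function on words, junk value on `[]`. -/
def pr (f : A → S) (l : List A) : S := (wordProd f l).getD (f default)

lemma pr_spec (f : A → S) {l : List A} (h : l ≠ []) : wordProd f l = some (pr f l) := by
  cases l with
  | nil => simp at h
  | cons a t => simp [wordProd, pr]

lemma pr_eq (f : A → S) {l : List A} {s : S} (h : wordProd f l = some s) : pr f l = s := by
  simp [pr, h]

lemma wordProd_nil (f : A → S) {l : List A} {s : S} (h : wordProd f l = some s) : l ≠ [] := by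
  rintro rfl; simp [wordProd] at h

lemma foldl_mul (f : A → S) (x y : S) (l : List A) :
    l.foldl (fun s b => s * f b) (x * y) = x * l.foldl (fun s b => s * f b) y := by
  induction l generalizing y with
  | nil => rfl
  | cons b t ih => simpa [mul_assoc] using ih (y * f b)

lemma wordProd_append (f : A → S) {l₁ l₂ : List A} (h₁ : l₁ ≠ []) (h₂ : l₂ ≠ []) :
    wordProd f (l₁ ++ l₂) = some (pr f l₁ * pr f l₂) := by
  match l₁, l₂ with
  | a :: t₁, b :: t₂ =>
    show wordProd f (a :: (t₁ ++ b :: t₂)) = _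
    simp only [wordProd, pr, Option.getD_some, List.foldl_append, List.foldl_cons,
      Option.some.injEq]
    rw [foldl_mul]

lemma pr_append (f : A → S) {l₁ l₂ : List A} (h₁ : l₁ ≠ []) (h₂ : l₂ ≠ []) :
    pr f (l₁ ++ l₂) = pr f l₁ * pr f l₂ :=
  pr_eq f (wordProd_append f h₁ h₂)

lemma seg_length {α : ℕ → A} {i j : ℕ} : (seg α i j).length = j - i := by
  simp [seg]

lemma seg_getElem {α : ℕ → A} {i j k : ℕ} (h : k < (seg α i j).length) :
    (seg α i j)[k] = α (i + k) := by
  simp [seg]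

lemma seg_ne_nil {α : ℕ → A} {i j : ℕ} (h : i < j) : seg α i j ≠ [] := by
  have : (seg α i j).length ≠ 0 := by rw [seg_length]; omega
  exact fun hn => this (by simp [hn])

lemma seg_append {α : ℕ → A} {i j k : ℕ} (h₁ : i ≤ j) (h₂ : j ≤ k) :
    seg α i j ++ seg α j k = seg α i k := by
  apply List.ext_getElem
  · simp [seg_length]; omega
  · intro n hn hn'
    rw [seg_getElem]
    by_cases hc : n < (seg α i j).length
    · rw [List.getElem_append_left hc, seg_getElem]
    · rw [List.getElem_append_right (le_of_not_gt hc), seg_getElem]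
      rw [seg_length] at hc ⊢
      congr 1; omega

lemma wordProd_seg_append (f : A → S) {α : ℕ → A} {i j k : ℕ} (h₁ : i < j) (h₂ : j < k) :
    wordProd f (seg α i k) = some (pr f (seg α i j) * pr f (seg α j k)) := by
  rw [← seg_append (le_of_lt h₁) (le_of_lt h₂)]
  exact wordProd_append f (seg_ne_nil h₁) (seg_ne_nil h₂)

end WilkeAux
namespace WilkeAux
set_option linter.unusedSectionVars false

variable {A S : Type*} [Inhabited A] [Semigroup S]

/-- `iter t n = t^(n+1)`. -/
def iter (t : S) : ℕ → S
  | 0 => t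
  | n + 1 => iter t n * t

lemma iter_add (t : S) (m n : ℕ) : iter t (m + n + 1) = iter t m * iter t n := by
  induction n with
  | zero => rfl
  | succ n ih =>
    have : m + (n + 1) + 1 = (m + n + 1) + 1 := by omega
    rw [this]
    show iter t (m + n + 1) * t = _
    rw [ih, mul_assoc]; rfl

lemma iter_shift {t : S} {i p : ℕ} (hp : 0 < p) (h : iter t i = iter t (i + p)) :
    ∀ m, i ≤ m → ∀ k, iter t (m + k * p) = iter t m := by
  have step : ∀ m, i ≤ m → iter t (m + p) = iter t m := by
    intro m hm
    rcases Nat.exists_eq_add_of_le hm with ⟨d, rfl⟩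
    cases d with
    | zero => simpa using h.symm
    | succ d =>
      have e1 : i + (d + 1) + p = (i + p) + d + 1 := by omega
      have e2 : i + (d + 1) = i + d + 1 := by omega
      rw [e1, e2, iter_add, iter_add, ← h]
  intro m hm k
  induction k with
  | zero => simp
  | succ k ih =>
    have : m + (k + 1) * p = (m + k * p) + p := by ring
    rw [this, step _ (by omega), ih]

lemma exists_idem [Fintype S] (t : S) : ∃ n, iter t n * iter t n = iter t n := by
  obtain ⟨i, j, hne, hij⟩ := Finite.exists_ne_map_eq_of_infinite (iter t)
  wlog hlt : i < j generalizing i j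
  · exact this j i (Ne.symm hne) hij.symm (by omega)
  set p := j - i with hp
  have hppos : 0 < p := by omega
  have hshift := iter_shift hppos (by rw [show i + p = j by omega]; exact hij)
  refine ⟨p * (i + 1) - 1, ?_⟩
  set n := p * (i + 1) - 1 with hn
  have hge : i + 1 ≤ p * (i + 1) := Nat.le_mul_of_pos_left _ hppos
  have hni : i ≤ n := by omega
  have h1 : n + n + 1 = n + (i + 1) * p := by rw [hn, Nat.mul_comm (i+1) p]; omega
  rw [← iter_add, h1, hshift n hni (i + 1)]

lemma iter_of_idem {e : S} (he : e * e = e) : ∀ k, iter e k = e := by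
  intro k; induction k with
  | zero => rfl
  | succ k ih => show iter e k * e = e; rw [ih, he]

/-- Product of consecutive chunks along a cut sequence. -/
lemma chunk_prod (f : A → S) {α : ℕ → A} {c : ℕ → ℕ} (hmono : StrictMono c) {t : S}
    (ht : ∀ i, wordProd f (seg α (c i) (c (i + 1))) = some t) (i j : ℕ) :
    wordProd f (seg α (c i) (c (i + j + 1))) = some (iter t j) := by
  induction j with
  | zero => exact ht i
  | succ j ih =>
    have h1 : c i < c (i + j + 1) := hmono (by omega)
    have h2 : c (i + j + 1) < c (i + j + 2) := hmono (by omega)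
    have := wordProd_seg_append f (α := α) h1 h2
    rw [show i + (j + 1) + 1 = i + j + 2 by omega, this, pr_eq f ih,
      pr_eq f (by simpa using ht (i + j + 1))]
    rfl

lemma chunk_prod' (f : A → S) {α : ℕ → A} {c : ℕ → ℕ} (hmono : StrictMono c) {t : S}
    (ht : ∀ i, wordProd f (seg α (c i) (c (i + 1))) = some t) {i j : ℕ} (hij : i < j) :
    wordProd f (seg α (c i) (c j)) = some (iter t (j - i - 1)) := by
  have := chunk_prod f hmono ht i (j - i - 1)
  rwa [show i + (j - i - 1) + 1 = j by omega] at this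

/-- For a linked pair, every prefix along the cuts has product `s`. -/
lemma prefix_linked (f : A → S) {α : ℕ → A} {c : ℕ → ℕ} (h0 : 0 < c 0)
    (hmono : StrictMono c) {s e : S} (he : e * e = e) (hse : s * e = s)
    (hs : wordProd f (seg α 0 (c 0)) = some s)
    (ht : ∀ i, wordProd f (seg α (c i) (c (i + 1))) = some e) (k : ℕ) :
    wordProd f (seg α 0 (c k)) = some s := by
  cases k with
  | zero => exact hs
  | succ k =>
    have h1 : (0:ℕ) < c 0 := h0
    have h2 : c 0 < c (k + 1) := hmono (by omega)
    rw [wordProd_seg_append f h1 h2, pr_eq f hs,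
      pr_eq f (chunk_prod' f hmono ht (by omega : 0 < k + 1)),
      iter_of_idem he, hse]

end WilkeAux
namespace WilkeAux
set_option linter.unusedSectionVars false
set_option linter.unusedVariables false

variable {A S : Type*} [Inhabited A] [Semigroup S]

lemma upow_nil (w : List A) : upow [] w = upow w w := by
  funext n
  simp only [upow, List.length_nil, Nat.not_lt_zero, if_false, Nat.sub_zero]
  by_cases hn : n < w.length
  · rw [if_pos hn, Nat.mod_eq_of_lt hn]
  · rw [if_neg hn, Nat.mod_eq_sub_mod (by omega)]

lemma seg_upow_prefix (u v : List A) (hu : u ≠ []) :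
    seg (upow u v) 0 u.length = u := by
  apply List.ext_getElem
  · simp [seg_length]
  · intro n h1 h2
    rw [seg_getElem]
    simp only [Nat.zero_add]
    rw [seg_length] at h1
    simp only [upow, if_pos (by omega : n < u.length)]
    exact List.getD_eq_getElem u default (by omega)

lemma seg_upow_block (u v : List A) (hv : v ≠ []) (i : ℕ) :
    seg (upow u v) (u.length + i * v.length) (u.length + (i + 1) * v.length) = v := by
  have hvl : 0 < v.length := List.length_pos_iff.mpr hv
  apply List.ext_getElem
  · rw [seg_length]; rw [Nat.succ_mul]; omega
  · intro n h1 h2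
    rw [seg_getElem]
    rw [seg_length] at h1
    have hn : n < v.length := by rw [Nat.succ_mul] at h1; omega
    simp only [upow, if_neg (by omega : ¬ u.length + i * v.length + n < u.length)]
    have e1 : u.length + i * v.length + n - u.length = n + i * v.length := by omega
    rw [e1, Nat.add_mul_mod_self_right, Nat.mod_eq_of_lt hn]
    exact List.getD_eq_getElem v default (by omega)

lemma InSE_upow (f : A → S) {u v : List A} (hu : u ≠ []) (hv : v ≠ []) :
    InSE f (pr f u) (pr f v) (upow u v) := by
  have hul : 0 < u.length := List.length_pos_iff.mpr hu
  have hvl : 0 < v.length := List.length_pos_iff.mpr hv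
  refine ⟨fun i => u.length + i * v.length, by simpa using hul, ?_, ?_, ?_⟩
  · intro i j hij
    show u.length + i * v.length < u.length + j * v.length
    have : i * v.length < j * v.length := (Nat.mul_lt_mul_right hvl).mpr hij
    omega
  · show wordProd f (seg (upow u v) 0 (u.length + 0 * v.length)) = _
    rw [show u.length + 0 * v.length = u.length by omega, seg_upow_prefix u v hu]
    exact pr_spec f hu
  · intro i
    show wordProd f (seg (upow u v) (u.length + i * v.length) (u.length + (i+1) * v.length)) = _
    rw [seg_upow_block u v hv i]
    exact pr_spec f hv

/-- Regrouping blocks: `[s][t]^ω ⊆ [s t^(n+1)][t^(n+1)]^ω`. -/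
lemma InSE_regroup (f : A → S) {s t : S} {α : ℕ → A} (n : ℕ) (h : InSE f s t α) :
    InSE f (s * iter t n) (iter t n) α := by
  obtain ⟨c, h0, hmono, hs, ht⟩ := h
  refine ⟨fun i => c ((n + 1) * (i + 1)), ?_, ?_, ?_, ?_⟩
  · show 0 < c ((n + 1) * (0 + 1))
    calc 0 < c 0 := h0
      _ ≤ c ((n + 1) * (0 + 1)) := hmono.monotone (by omega)
  · intro i j hij
    show c ((n + 1) * (i + 1)) < c ((n + 1) * (j + 1))
    exact hmono ((Nat.mul_lt_mul_left (show 0 < n + 1 by omega)).mpr (by omega))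
  · show wordProd f (seg α 0 (c ((n + 1) * (0 + 1)))) = _
    have h1 : (0:ℕ) < c 0 := h0
    have h2 : c 0 < c ((n + 1) * (0 + 1)) := hmono (by omega)
    rw [wordProd_seg_append f h1 h2, pr_eq f hs,
      pr_eq f (chunk_prod' f hmono ht (show 0 < (n+1)*(0+1) by omega))]
    norm_num
  · intro i
    show wordProd f (seg α (c ((n + 1) * (i + 1))) (c ((n + 1) * (i + 1 + 1)))) = _
    have hlt : (n + 1) * (i + 1) < (n + 1) * (i + 1 + 1) :=
      (Nat.mul_lt_mul_left (by omega)).mpr (by omega)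
    rw [chunk_prod' f hmono ht hlt]
    have e : (n + 1) * (i + 1 + 1) - (n + 1) * (i + 1) - 1 = n := by
      rw [Nat.mul_add (n+1) (i+1) 1]; omega
    rw [e]

end WilkeAux
namespace WilkeAux
set_option linter.unusedSectionVars false
set_option linter.unusedVariables false

/-- Interleaving cut indices for two factorizations. -/
def inter (c d : ℕ → ℕ) : ℕ → ℕ × ℕ
  | 0 => (0, c 0 + 1)
  | k + 1 => (d (inter c d k).2 + 1, c (d (inter c d k).2 + 1) + 1)

lemma inter_snd (c d : ℕ → ℕ) (k : ℕ) : (inter c d k).2 = c (inter c d k).1 + 1 := by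
  cases k <;> rfl

variable {A S : Type*} [Inhabited A] [Semigroup S]

lemma conj_of_two (f : A → S) [Fintype S] {α : ℕ → A} {s e s' e' : S}
    (hee : e * e = e) (hse : s * e = s) (hee' : e' * e' = e') (hse' : s' * e' = s')
    (h1 : InSE f s e α) (h2 : InSE f s' e' α) :
    ConjPairs (s, e) (s', e') := by
  obtain ⟨c, hc0, hcm, hcs, hct⟩ := h1
  obtain ⟨d, hd0, hdm, hds, hdt⟩ := h2
  set I : ℕ → ℕ := fun k => (inter c d k).1 with hI
  set J : ℕ → ℕ := fun k => (inter c d k).2 with hJ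
  have hJI : ∀ k, J k = c (I k) + 1 := fun k => inter_snd c d k
  have hIJ : ∀ k, I (k + 1) = d (J k) + 1 := fun k => rfl
  have hcd : ∀ k, c (I k) < d (J k) := by
    intro k
    calc c (I k) < J k := by rw [hJI k]; omega
      _ ≤ d (J k) := hdm.le_apply
  have hdc : ∀ k, d (J k) < c (I (k + 1)) := by
    intro k
    calc d (J k) < I (k + 1) := by rw [hIJ k]; omega
      _ ≤ c (I (k + 1)) := hcm.le_apply
  have hImono : StrictMono I := by
    apply strictMono_nat_of_lt_succ
    intro k
    rw [hIJ k]
    have h1 := hcd k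
    have h2 : I k ≤ c (I k) := hcm.le_apply
    omega
  have hJmono : StrictMono J := by
    apply strictMono_nat_of_lt_succ
    intro k
    rw [hJI k, hJI (k + 1)]
    have := hcm (hImono (by omega : k < k + 1))
    omega
  have hc0' : ∀ k, 0 < c (I k) := fun k => lt_of_lt_of_le hc0 (hcm.monotone (Nat.zero_le _))
  -- prefixes
  have pc : ∀ k, wordProd f (seg α 0 (c k)) = some s :=
    prefix_linked f hc0 hcm hee hse hcs hct
  have pd : ∀ k, wordProd f (seg α 0 (d k)) = some s' :=
    prefix_linked f hd0 hdm hee' hse' hds hdt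
  -- pigeonhole on products of segments [c (I k), d (J k))
  set x : ℕ → S := fun k => pr f (seg α (c (I k)) (d (J k))) with hx
  obtain ⟨k, l, hkl, hxeq⟩ := Finite.exists_ne_map_eq_of_infinite x
  wlog hlt : k < l generalizing k l
  · exact this l k (Ne.symm hkl) hxeq.symm (by omega)
  have hmid : d (J k) < c (I l) :=
    lt_of_lt_of_le (hdc k) (hcm.monotone (hImono.monotone (by omega)))
  refine ⟨x k, pr f (seg α (d (J k)) (c (I l))), ?_, ?_, ?_⟩
  · -- s * x k = s'
    have A2 : wordProd f (seg α 0 (d (J k))) = some (s * x k) := by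
      rw [wordProd_seg_append f (hc0' k) (hcd k), pr_eq f (pc (I k))]
    have := (pd (J k)).symm.trans A2
    exact (Option.some.injEq _ _ ▸ this).symm
  · -- x k * Y = e
    have B1 : wordProd f (seg α (c (I k)) (c (I l))) = some e := by
      rw [chunk_prod' f hcm hct (hImono hlt), iter_of_idem hee]
    have B2 : wordProd f (seg α (c (I k)) (c (I l))) =
        some (x k * pr f (seg α (d (J k)) (c (I l)))) := by
      rw [wordProd_seg_append f (hcd k) hmid]
    have := B2.symm.trans B1
    exact Option.some.injEq _ _ ▸ this
  · -- Y * x l = e'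
    have C1 : wordProd f (seg α (d (J k)) (d (J l))) = some e' := by
      rw [chunk_prod' f hdm hdt (hJmono hlt), iter_of_idem hee']
    have C2 : wordProd f (seg α (d (J k)) (d (J l))) =
        some (pr f (seg α (d (J k)) (c (I l))) * x l) := by
      rw [wordProd_seg_append f hmid (hcd l)]
    rw [hxeq]
    have := C2.symm.trans C1
    exact Option.some.injEq _ _ ▸ this

end WilkeAux
namespace WilkeAux
set_option linter.unusedSectionVars false
set_option linter.unusedVariables false

variable {A S : Type*} [Inhabited A] [Semigroup S] [Fintype S]

/-- Key membership lemma: `u z^ω ∈ L ↔ ([h u][h z]^ω ⊆ L)`. -/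
lemma memA (f : A → S)
    (P : Set (S × S)) (hP : ∀ p ∈ P, IsLinkedPair p.1 p.2)
    (hclosed : ∀ p q : S × S, p ∈ P → IsLinkedPair q.1 q.2 → ConjPairs p q → q ∈ P)
    (L : Set (ℕ → A)) (hL : L = LangOf f P) {u z : List A} (hu : u ≠ []) (hz : z ≠ []) :
    upow u z ∈ L ↔ (pr f u, pr f z) ∈ {q : S × S | ∀ α, InSE f q.1 q.2 α → α ∈ L} := by
  set s := pr f u
  set t := pr f z
  constructor
  · intro hmem
    obtain ⟨n, hn⟩ := exists_idem t
    set e := iter t n with he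
    have hq : IsLinkedPair (s * e) e := ⟨hn, by rw [mul_assoc, hn]⟩
    rw [hL] at hmem
    obtain ⟨p, hpP, hpin⟩ := hmem
    have hlp := hP p hpP
    have h1 : InSE f (s * e) e (upow u z) := InSE_regroup f n (InSE_upow f hu hz)
    have hconj : ConjPairs (p.1, p.2) (s * e, e) :=
      conj_of_two f hlp.1 hlp.2 hq.1 hq.2 hpin h1
    have hPm : (s * e, e) ∈ P := hclosed p (s * e, e) hpP hq (by
      have : (p.1, p.2) = p := rfl
      rwa [this] at hconj)
    intro α hα
    rw [hL]
    exact ⟨(s * e, e), hPm, InSE_regroup f n hα⟩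
  · intro hQ
    exact hQ _ (InSE_upow f hu hz)

lemma eqQ_of_syn (f : A → S) (hsurj : ∀ s : S, ∃ l : List A, wordProd f l = some s)
    (P : Set (S × S)) (hP : ∀ p ∈ P, IsLinkedPair p.1 p.2)
    (hclosed : ∀ p q : S × S, p ∈ P → IsLinkedPair q.1 q.2 → ConjPairs p q → q ∈ P)
    (L : Set (ℕ → A)) (hL : L = LangOf f P) {u v : List A} (hu : u ≠ []) (hv : v ≠ [])
    (hsyn : SynCong L u v) (x y : List A) :
    EqQ {q : S × S | ∀ α, InSE f q.1 q.2 α → α ∈ L}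
      (pr f (x ++ u ++ y)) (pr f (x ++ v ++ y)) := by
  have hune : x ++ u ++ y ≠ [] := by simp [hu]
  have hvne : x ++ v ++ y ≠ [] := by simp [hv]
  intro z
  obtain ⟨w, hw⟩ := hsurj z
  have hwne := wordProd_nil f hw
  have hpw := pr_eq f hw
  constructor
  · rw [← hpw, ← memA f P hP hclosed L hL hwne hune, ← memA f P hP hclosed L hL hwne hvne]
    exact (hsyn x y w).2
  · rw [← hpw, ← memA f P hP hclosed L hL hune hwne, ← memA f P hP hclosed L hL hvne hwne]
    exact (hsyn x y w).1 hwne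

lemma syn_iff_cong (f : A → S) (hsurj : ∀ s : S, ∃ l : List A, wordProd f l = some s)
    (P : Set (S × S)) (hP : ∀ p ∈ P, IsLinkedPair p.1 p.2)
    (hclosed : ∀ p q : S × S, p ∈ P → IsLinkedPair q.1 q.2 → ConjPairs p q → q ∈ P)
    (L : Set (ℕ → A)) (hL : L = LangOf f P) {u v : List A} (hu : u ≠ []) (hv : v ≠ []) :
    SynCong L u v ↔
      CongQ {q : S × S | ∀ α, InSE f q.1 q.2 α → α ∈ L} (pr f u) (pr f v) := by
  set Q := {q : S × S | ∀ α, InSE f q.1 q.2 α → α ∈ L} with hQ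
  have hmemA : ∀ {a b : List A}, a ≠ [] → b ≠ [] →
      (upow a b ∈ L ↔ (pr f a, pr f b) ∈ Q) :=
    fun ha hb => memA f P hP hclosed L hL ha hb
  constructor
  · -- SynCong → CongQ
    intro hsyn
    have key := eqQ_of_syn f hsurj P hP hclosed L hL hu hv hsyn
    refine ⟨?_, ?_, ?_, ?_⟩
    · have := key [] []
      simpa using this
    · intro x
      obtain ⟨wx, hwx⟩ := hsurj x
      have hwxne := wordProd_nil f hwx
      have := key wx []
      rw [List.append_nil, List.append_nil, pr_append f hwxne hu, pr_append f hwxne hv,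
        pr_eq f hwx] at this
      exact this
    · intro y
      obtain ⟨wy, hwy⟩ := hsurj y
      have hwyne := wordProd_nil f hwy
      have := key [] wy
      rw [List.nil_append, List.nil_append, pr_append f hu hwyne, pr_append f hv hwyne,
        pr_eq f hwy] at this
      exact this
    · intro x y
      obtain ⟨wx, hwx⟩ := hsurj x
      obtain ⟨wy, hwy⟩ := hsurj y
      have hwxne := wordProd_nil f hwx
      have hwyne := wordProd_nil f hwy
      have := key wx wy
      rw [pr_append f (by simp [hwxne] : wx ++ u ≠ []) hwyne,
        pr_append f (by simp [hwxne] : wx ++ v ≠ []) hwyne,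
        pr_append f hwxne hu, pr_append f hwxne hv, pr_eq f hwx, pr_eq f hwy] at this
      exact this
  · -- CongQ → SynCong
    intro hC
    intro x y z
    have hune : x ++ u ++ y ≠ [] := by simp [hu]
    have hvne : x ++ v ++ y ≠ [] := by simp [hv]
    have hEq : EqQ Q (pr f (x ++ u ++ y)) (pr f (x ++ v ++ y)) := by
      rcases x with - | ⟨a, x⟩ <;> rcases y with - | ⟨b, y⟩
      · simpa using hC.1
      · have hyne : (b :: y : List A) ≠ [] := by simp
        rw [List.nil_append, List.nil_append, pr_append f hu hyne, pr_append f hv hyne]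
        exact hC.2.2.1 _
      · have hxne : (a :: x : List A) ≠ [] := by simp
        rw [List.append_nil, List.append_nil, pr_append f hxne hu, pr_append f hxne hv]
        exact hC.2.1 _
      · have hxne : (a :: x : List A) ≠ [] := by simp
        have hyne : (b :: y : List A) ≠ [] := by simp
        rw [pr_append f (by simp [hxne] : (a::x) ++ u ≠ []) hyne,
          pr_append f (by simp [hxne] : (a::x) ++ v ≠ []) hyne,
          pr_append f hxne hu, pr_append f hxne hv]
        exact hC.2.2.2 _ _
    constructor
    · intro hz
      rw [hmemA hune hz, hmemA hvne hz]
      exact (hEq (pr f z)).2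
    · rcases eq_or_ne z [] with rfl | hz
      · rw [upow_nil (x ++ u ++ y), upow_nil (x ++ v ++ y),
          hmemA hune hune, hmemA hvne hvne]
        exact ((hEq (pr f (x ++ u ++ y))).1).trans
          ((hEq (pr f (x ++ v ++ y))).2)
      · rw [hmemA hz hune, hmemA hz hvne]
        exact (hEq (pr f z)).1

end WilkeAux
namespace WilkeAux
set_option linter.unusedSectionVars false
set_option linter.unusedVariables false

lemma congQ_refl {S : Type*} [Semigroup S] (Q : Set (S × S)) (s : S) : CongQ Q s s :=
  ⟨fun _ => ⟨Iff.rfl, Iff.rfl⟩, fun _ _ => ⟨Iff.rfl, Iff.rfl⟩,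
   fun _ _ => ⟨Iff.rfl, Iff.rfl⟩, fun _ _ _ => ⟨Iff.rfl, Iff.rfl⟩⟩

end WilkeAux


open WilkeAux

/-- Proposition: with `L = [P]` strongly recognized by the surjective `h : A⁺ → S`
and `Q = {(s,t) : [s][t]^ω ⊆ L}`, the quotient `S/≡` is isomorphic to the syntactic
semigroup `A⁺/≡_L`; the isomorphism is induced by `h`, i.e. it maps the class of a
word `u` to the class of `h(u)`. -/
theorem quotient_iso_syntactic {A S : Type*} [Inhabited A] [Semigroup S] [Fintype S]
    (f : A → S) (hsurj : ∀ s : S, ∃ l : List A, wordProd f l = some s)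
    (P : Set (S × S)) (hP : ∀ p ∈ P, IsLinkedPair p.1 p.2)
    (hclosed : ∀ p q : S × S, p ∈ P → IsLinkedPair q.1 q.2 → ConjPairs p q → q ∈ P)
    (L : Set (ℕ → A)) (hL : L = LangOf f P) :
    ∃ φ : Quot (fun u v : Word A => SynCong L u.1 v.1) ≃
        Quot (CongQ {q : S × S | ∀ α, InSE f q.1 q.2 α → α ∈ L}),
      ∀ (u : Word A) (s : S), wordProd f u.1 = some s →
        φ (Quot.mk _ u) = Quot.mk _ s := by
  have key : ∀ u v : Word A, SynCong L u.1 v.1 ↔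
      CongQ {q : S × S | ∀ α, InSE f q.1 q.2 α → α ∈ L} (pr f u.1) (pr f v.1) := fun u v =>
    syn_iff_cong f hsurj P hP hclosed L hL u.2 v.2
  refine ⟨⟨Quot.lift
      (fun u : Word A => Quot.mk (CongQ {q : S × S | ∀ α, InSE f q.1 q.2 α → α ∈ L}) (pr f u.1))
      (fun a b h => Quot.sound ((key a b).mp h)),
    Quot.lift
      (fun s : S => Quot.mk (fun u v : Word A => SynCong L u.1 v.1)
        (⟨Classical.choose (hsurj s), wordProd_nil f (Classical.choose_spec (hsurj s))⟩ : Word A))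
      (fun a b h => Quot.sound ((key _ _).mpr (by
        rw [pr_eq f (Classical.choose_spec (hsurj a)), pr_eq f (Classical.choose_spec (hsurj b))]
        exact h))), ?_, ?_⟩, ?_⟩
  · intro q
    induction q using Quot.ind with
    | _ u =>
      exact Quot.sound ((key _ _).mpr (by
        rw [pr_eq f (Classical.choose_spec (hsurj (pr f u.1)))]
        exact congQ_refl _ (pr f u.1)))
  · intro q
    induction q using Quot.ind with
    | _ s =>
      exact congrArg (Quot.mk _) (pr_eq f (Classical.choose_spec (hsurj s)))
  · intro u s hus
    exact congrArg (Quot.mk _) (pr_eq f hus)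
end
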